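/- arXiv:1911.12874 — 6 statements merged into one kernel-verified Lean document; each statement's English description precedes it below -/
import Mathlib

section
/- Let λ ∈ (0,1) and let K, L, M ⊂ ℝ be non-empty sets such that (1-λ)K + λL ⊆ M, and suppose M = ⋃_{i=1}^s [a_i, b_i] is a finite union of pairwise disjoint compact intervals. Then G_1(M) + Z(M) ≥ (1-λ)G_1(K) + λG_1(L), where Z(M) is the number of non-integer endpoints among a_1,…,a_s,b_1,…,b_s. -/
open Set
open scoped Pointwise Classical

/-- The lattice point enumerator on `ℝ`. -/
noncomputable def latticeEnum1 (M : Set ℝ) : ℕ := (M ∩ {x : ℝ | ∃ z : ℤ, x = z}).ncard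

/-!
Choose `x₀ ∈ K` above all integer points of `K` and `y₀ ∈ L` below all integer points of `L`.
Every integer point `z` of `K` gives the point `(1-λ)z + λy₀` of `M`, every integer point `w` of
`L` the point `(1-λ)x₀ + λw`. If `Aᵢ`, `Bᵢ` are those landing in `[aᵢ, bᵢ]`, then `max Aᵢ ≤ x₀`
and `y₀ ≤ min Bᵢ` give `(1-λ)(max Aᵢ - min Aᵢ) + λ(max Bᵢ - min Bᵢ) ≤ bᵢ - aᵢ`, hence
`(1-λ)|Aᵢ| + λ|Bᵢ| ≤ bᵢ - aᵢ + 1`. Summing over `i`, it remains to see that `bᵢ - aᵢ + 1` is at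
most the number of integers in `[aᵢ, bᵢ]` plus the number of non-integral endpoints: `⌈aᵢ⌉ - aᵢ`
and `bᵢ - ⌊bᵢ⌋` are less than `1` and vanish at integers.
-/

open Function

theorem Set.exists_finset_subset_card_eq_ncard {α : Type*} (S : Set α) :
    ∃ A : Finset α, ↑A ⊆ S ∧ A.card = S.ncard := by
  by_cases hS : S.Finite
  · exact ⟨hS.toFinset, by simp, (ncard_eq_toFinset_card S hS).symm⟩
  · exact ⟨∅, by simp, by simp [Infinite.ncard hS]⟩

theorem existsUnique_mem_of_mem_iUnion {ι α : Type*} {I : ι → Set α}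
    (hdisj : Pairwise (Disjoint on I)) {x : α} (hx : x ∈ ⋃ i, I i) : ∃! i, x ∈ I i := by
  obtain ⟨i, hi⟩ := mem_iUnion.mp hx
  exact ⟨i, hi, fun j hj => hdisj.eq (not_disjoint_iff.mpr ⟨x, hj, hi⟩)⟩

theorem Finset.card_eq_sum_card_filter_of_existsUnique {α ι : Type*} [Fintype ι]
    (F : Finset α) (P : ι → α → Prop) [∀ i, DecidablePred (P i)]
    (h : ∀ x ∈ F, ∃! i, P i x) : F.card = ∑ i, (F.filter (P i)).card := by
  have hone : ∀ x ∈ F, ∑ i, (if P i x then 1 else 0) = 1 := by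
    intro x hx
    obtain ⟨i, hi, huniq⟩ := h x hx
    rw [← Finset.card_filter, Finset.card_eq_one]
    exact ⟨i, by ext j; simpa using ⟨huniq j, fun hj => hj ▸ hi⟩⟩
  simp only [Finset.card_filter]
  rw [Finset.sum_comm, Finset.card_eq_sum_ones]
  exact (Finset.sum_congr rfl hone).symm

theorem Finset.card_le_max'_sub_min'_add_one (A : Finset ℤ) (h : A.Nonempty) :
    (A.card : ℝ) ≤ A.max' h - A.min' h + 1 := by
  have hcard : A.card ≤ (Finset.Icc (A.min' h) (A.max' h)).card :=
    Finset.card_le_card fun z hz => Finset.mem_Icc.mpr ⟨A.min'_le z hz, A.le_max' z hz⟩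
  rw [Int.card_Icc] at hcard
  have hle : A.min' h ≤ A.max' h := A.min'_le _ (A.max'_mem h)
  have : (A.card : ℤ) ≤ A.max' h - A.min' h + 1 := by omega
  exact_mod_cast this

theorem ceil_le_add_ite (x : ℝ) :
    (⌈x⌉ : ℝ) ≤ x + if ¬ ∃ z : ℤ, x = z then 1 else 0 := by
  split_ifs with h
  · obtain ⟨z, rfl⟩ := h
    simp
  · exact (Int.ceil_lt_add_one x).le

theorem sub_ite_le_floor (x : ℝ) :
    x - (if ¬ ∃ z : ℤ, x = z then 1 else 0) ≤ ⌊x⌋ := by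
  split_ifs with h
  · obtain ⟨z, rfl⟩ := h
    simp
  · exact (Int.sub_one_lt_floor x).le

theorem sub_add_one_le_card_Icc_ceil_floor (a b : ℝ) :
    b - a + 1 ≤ ((Finset.Icc ⌈a⌉ ⌊b⌋).card : ℝ)
      + (if ¬ ∃ z : ℤ, a = z then 1 else 0) + (if ¬ ∃ z : ℤ, b = z then 1 else 0) := by
  have hcard : ((⌊b⌋ + 1 - ⌈a⌉ : ℤ) : ℝ) ≤ ((Finset.Icc ⌈a⌉ ⌊b⌋).card : ℝ) := by
    rw [Int.card_Icc]
    exact_mod_cast Int.self_le_toNat _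
  push_cast at hcard
  linarith [ceil_le_add_ite a, sub_ite_le_floor b]

theorem latticeEnum1_eq_ncard (S : Set ℝ) :
    latticeEnum1 S = {z : ℤ | (z : ℝ) ∈ S}.ncard := by
  rw [latticeEnum1, ← Set.ncard_image_of_injective _ (Int.cast_injective (α := ℝ))]
  congr 1
  ext x
  constructor
  · rintro ⟨hx, z, rfl⟩
    exact ⟨z, hx, rfl⟩
  · rintro ⟨z, hz, rfl⟩
    exact ⟨hz, z, rfl⟩

theorem latticeEnum1_iUnion_Icc {ι : Type*} [Fintype ι] (a b : ι → ℝ)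
    (hdisj : Pairwise (Disjoint on fun i => Icc (a i) (b i))) :
    latticeEnum1 (⋃ i, Icc (a i) (b i)) = ∑ i, (Finset.Icc ⌈a i⌉ ⌊b i⌋).card := by
  have hpts : {z : ℤ | (z : ℝ) ∈ ⋃ i, Icc (a i) (b i)}
      = ↑(Finset.univ.biUnion fun i => Finset.Icc ⌈a i⌉ ⌊b i⌋) := by
    ext z
    simp [Int.ceil_le, Int.le_floor]
  rw [latticeEnum1_eq_ncard, hpts, ncard_coe_finset, Finset.card_biUnion]
  intro i _ j _ hij
  refine Finset.disjoint_left.mpr fun z hzi hzj => disjoint_left.mp (hdisj hij)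
    (show (z : ℝ) ∈ Icc (a i) (b i) by simpa [Int.ceil_le, Int.le_floor] using hzi)
    (show (z : ℝ) ∈ Icc (a j) (b j) by simpa [Int.ceil_le, Int.le_floor] using hzj)

theorem exists_mem_forall_intCast_le {K : Set ℝ} (hK : K.Nonempty) {A : Finset ℤ}
    (hA : ∀ z ∈ A, (z : ℝ) ∈ K) : ∃ x ∈ K, ∀ z ∈ A, (z : ℝ) ≤ x := by
  rcases A.eq_empty_or_nonempty with rfl | hne
  · obtain ⟨x, hx⟩ := hK
    exact ⟨x, hx, by simp⟩
  · exact ⟨_, hA _ (A.max'_mem hne), fun z hz => by exact_mod_cast A.le_max' z hz⟩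

theorem exists_mem_forall_le_intCast {K : Set ℝ} (hK : K.Nonempty) {A : Finset ℤ}
    (hA : ∀ z ∈ A, (z : ℝ) ∈ K) : ∃ x ∈ K, ∀ z ∈ A, x ≤ (z : ℝ) := by
  rcases A.eq_empty_or_nonempty with rfl | hne
  · obtain ⟨x, hx⟩ := hK
    exact ⟨x, hx, by simp⟩
  · exact ⟨_, hA _ (A.min'_mem hne), fun z hz => by exact_mod_cast A.min'_le z hz⟩

theorem weighted_card_le_sub_add_one {lam a b : ℝ} (hlam : lam ∈ Icc 0 1) (hab : a ≤ b)
    {A B : Finset ℤ} {x₀ y₀ : ℝ} (hAx : ∀ z ∈ A, (z : ℝ) ≤ x₀) (hBy : ∀ z ∈ B, y₀ ≤ z)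
    (hA : ∀ z ∈ A, (1 - lam) * z + lam * y₀ ∈ Icc a b)
    (hB : ∀ z ∈ B, (1 - lam) * x₀ + lam * z ∈ Icc a b) :
    (1 - lam) * A.card + lam * B.card ≤ b - a + 1 := by
  obtain ⟨hl0, hl1⟩ := hlam
  have hl1' : 0 ≤ 1 - lam := sub_nonneg.mpr hl1
  rcases A.eq_empty_or_nonempty with rfl | hAne <;>
    rcases B.eq_empty_or_nonempty with rfl | hBne
  · simp only [Finset.card_empty, Nat.cast_zero, mul_zero, add_zero]
    linarith
  · have hmin := (hB _ (B.min'_mem hBne)).1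
    have hmax := (hB _ (B.max'_mem hBne)).2
    have hc := mul_le_mul_of_nonneg_left (B.card_le_max'_sub_min'_add_one hBne) hl0
    simp only [Finset.card_empty, Nat.cast_zero, mul_zero, zero_add]
    linarith
  · have hmin := (hA _ (A.min'_mem hAne)).1
    have hmax := (hA _ (A.max'_mem hAne)).2
    have hc := mul_le_mul_of_nonneg_left (A.card_le_max'_sub_min'_add_one hAne) hl1'
    simp only [Finset.card_empty, Nat.cast_zero, mul_zero, add_zero]
    linarith
  · have hmin := (hA _ (A.min'_mem hAne)).1
    have hmax := (hB _ (B.max'_mem hBne)).2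
    have hAx₀ := mul_le_mul_of_nonneg_left (hAx _ (A.max'_mem hAne)) hl1'
    have hBy₀ := mul_le_mul_of_nonneg_left (hBy _ (B.min'_mem hBne)) hl0
    have hcA := mul_le_mul_of_nonneg_left (A.card_le_max'_sub_min'_add_one hAne) hl1'
    have hcB := mul_le_mul_of_nonneg_left (B.card_le_max'_sub_min'_add_one hBne) hl0
    linarith

theorem weighted_card_le_sum_sub_add_one {ι : Type*} [Fintype ι] {lam : ℝ}
    (hlam : lam ∈ Icc 0 1) {a b : ι → ℝ} (hab : ∀ i, a i ≤ b i)
    (hdisj : Pairwise (Disjoint on fun i => Icc (a i) (b i))) {K L : Set ℝ}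
    (hK : K.Nonempty) (hL : L.Nonempty)
    (hKL : ∀ x ∈ K, ∀ y ∈ L, (1 - lam) * x + lam * y ∈ ⋃ i, Icc (a i) (b i))
    {A B : Finset ℤ} (hAK : ∀ z ∈ A, (z : ℝ) ∈ K) (hBL : ∀ z ∈ B, (z : ℝ) ∈ L) :
    (1 - lam) * A.card + lam * B.card ≤ ∑ i, (b i - a i + 1) := by
  obtain ⟨x₀, hx₀, hAx⟩ := exists_mem_forall_intCast_le hK hAK
  obtain ⟨y₀, hy₀, hBy⟩ := exists_mem_forall_le_intCast hL hBL
  rw [A.card_eq_sum_card_filter_of_existsUnique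
      (fun i z => (1 - lam) * z + lam * y₀ ∈ Icc (a i) (b i))
      fun z hz => existsUnique_mem_of_mem_iUnion hdisj (hKL _ (hAK z hz) _ hy₀),
    B.card_eq_sum_card_filter_of_existsUnique
      (fun i z => (1 - lam) * x₀ + lam * z ∈ Icc (a i) (b i))
      fun z hz => existsUnique_mem_of_mem_iUnion hdisj (hKL _ hx₀ _ (hBL z hz))]
  push_cast
  rw [Finset.mul_sum, Finset.mul_sum, ← Finset.sum_add_distrib]
  exact Finset.sum_le_sum fun i _ => weighted_card_le_sub_add_one hlam (hab i)
    (fun z hz => hAx z (Finset.mem_filter.mp hz).1)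
    (fun z hz => hBy z (Finset.mem_filter.mp hz).1)
    (fun z hz => (Finset.mem_filter.mp hz).2) (fun z hz => (Finset.mem_filter.mp hz).2)

theorem stmt3_general (lam : ℝ) (hlam : lam ∈ Set.Ioo (0 : ℝ) 1)
    (K L M : Set ℝ) (hK : K.Nonempty) (hL : L.Nonempty)
    (hsub : (1 - lam) • K + lam • L ⊆ M)
    (s : ℕ) (a b : Fin s → ℝ) (hab : ∀ i, a i ≤ b i)
    (hdisj : ∀ i j, i ≠ j → Disjoint (Set.Icc (a i) (b i)) (Set.Icc (a j) (b j)))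
    (hM : M = ⋃ i, Set.Icc (a i) (b i)) :
    ((latticeEnum1 M : ℝ) +
        ((Finset.univ.filter fun i : Fin s => ¬ ∃ z : ℤ, a i = z).card
          + (Finset.univ.filter fun i : Fin s => ¬ ∃ z : ℤ, b i = z).card : ℕ)) ≥
      (1 - lam) * (latticeEnum1 K : ℝ) + lam * (latticeEnum1 L : ℝ) := by
  subst hM
  have hKL : ∀ x ∈ K, ∀ y ∈ L, (1 - lam) * x + lam * y ∈ ⋃ i, Icc (a i) (b i) :=
    fun x hx y hy => hsub (add_mem_add (smul_mem_smul_set hx) (smul_mem_smul_set hy))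
  -- `ncard` vanishes on infinite sets, so finite subsets of the integer points suffice.
  obtain ⟨A, hAK, hA⟩ := exists_finset_subset_card_eq_ncard {z : ℤ | (z : ℝ) ∈ K}
  obtain ⟨B, hBL, hB⟩ := exists_finset_subset_card_eq_ncard {z : ℤ | (z : ℝ) ∈ L}
  rw [ge_iff_le, latticeEnum1_eq_ncard K, latticeEnum1_eq_ncard L, ← hA, ← hB,
    latticeEnum1_iUnion_Icc a b fun i j => hdisj i j, Finset.card_filter, Finset.card_filter]
  calc (1 - lam) * (A.card : ℝ) + lam * B.card
      ≤ ∑ i, (b i - a i + 1) :=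
        weighted_card_le_sum_sub_add_one (Ioo_subset_Icc_self hlam) hab (fun i j => hdisj i j)
          hK hL hKL (fun z hz => hAK hz) (fun z hz => hBL hz)
    _ ≤ ∑ i, (((Finset.Icc ⌈a i⌉ ⌊b i⌋).card : ℝ) + (if ¬ ∃ z : ℤ, a i = z then 1 else 0)
          + (if ¬ ∃ z : ℤ, b i = z then 1 else 0)) :=
        Finset.sum_le_sum fun i _ => sub_add_one_le_card_Icc_ceil_floor (a i) (b i)
    _ = _ := by
        push_cast
        rw [Finset.sum_add_distrib, Finset.sum_add_distrib, add_assoc]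

theorem stmt3 (lam : ℝ) (hlam : lam ∈ Set.Ioo (0 : ℝ) 1)
    (K L M : Set ℝ) (hK : K.Nonempty) (hL : L.Nonempty)
    (hsub : (1 - lam) • K + lam • L ⊆ M)
    (s : ℕ) (hs : 0 < s) (a b : Fin s → ℝ) (hab : ∀ i, a i ≤ b i)
    (hdisj : ∀ i j, i ≠ j → Disjoint (Set.Icc (a i) (b i)) (Set.Icc (a j) (b j)))
    (hM : M = ⋃ i, Set.Icc (a i) (b i)) :
    ((latticeEnum1 M : ℝ) +
        ((Finset.univ.filter fun i : Fin s => ¬ ∃ z : ℤ, a i = z).card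
          + (Finset.univ.filter fun i : Fin s => ¬ ∃ z : ℤ, b i = z).card : ℕ)) ≥
      (1 - lam) * (latticeEnum1 K : ℝ) + lam * (latticeEnum1 L : ℝ) :=
  stmt3_general lam hlam K L M hK hL hsub s a b hab hdisj hM
end

section
/- Let λ ∈ (0,1) and let K, L ⊂ ℝ be non-empty bounded sets. Then G_1((1-λ)K + λL + (-1,1)) ≥ (1-λ)G_1(K) + λG_1(L). -/
open Set
open scoped Pointwise

/-!
Since `⌊x⌋` lies in `p + (-1, 1)` for `x ∈ [p, p + 1)`, and each integer has a fibre of length one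
under the floor map, the number of integer points of `V + (-1, 1)` is at least the measure of
`V + [0, 1)`. Let `A`, `B` be the integer points of `K`, `L` (or a single point, if there are none),
`a = max A` and `b = min B`. Then `(1 - λ) • A + λ • B` contains the two chains
`(1 - λ) • A + λ b ≤ (1 - λ) a + λ b ≤ (1 - λ) a + λ • B`, with gaps at least `1 - λ` and `λ`.
Their unit thickenings have measure at least `(1 - λ) (|A| - 1) + 1` and `λ (|B| - 1) + 1` and
overlap in length at most one, so together they have measure at least `(1 - λ) |A| + λ |B|`.
-/

open MeasureTheory

lemma Bornology.IsBounded.finite_inter_intCast {S : Set ℝ} (hS : Bornology.IsBounded S) :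
    (S ∩ {x : ℝ | ∃ z : ℤ, x = z}).Finite := by
  have hfin : {z : ℤ | (z : ℝ) ∈ closure S}.Finite := by
    simpa using Filter.eventually_cofinite.1
      (Int.tendsto_coe_cofinite.eventually hS.isCompact_closure.compl_mem_cocompact)
  refine (hfin.image ((↑) : ℤ → ℝ)).subset ?_
  rintro _ ⟨hx, z, rfl⟩
  exact ⟨z, subset_closure hx, rfl⟩

lemma volume_add_volume_le_volume_union_add {X Y : Set ℝ} {c r : ℝ}
    (hX : X ⊆ Iio (c + r)) (hY : Y ⊆ Ici c) :
    volume X + volume Y ≤ volume (X ∪ Y) + ENNReal.ofReal r := by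
  have hXc : X \ Iio c ⊆ Ico c (c + r) := fun x hx => ⟨not_lt.1 hx.2, hX hx.1⟩
  have hYc : Y ⊆ (X ∪ Y) \ Iio c := fun y hy => ⟨Or.inr hy, not_lt.2 (mem_Ici.1 (hY hy))⟩
  calc volume X + volume Y
      ≤ volume (X ∩ Iio c) + volume (X \ Iio c) + volume Y := by
        gcongr; exact measure_le_inter_add_sdiff (μ := volume) _ _
    _ ≤ volume ((X ∪ Y) ∩ Iio c) + ENNReal.ofReal r + volume ((X ∪ Y) \ Iio c) := by
        gcongr ?_ + ?_ + ?_
        · exact measure_mono (inter_subset_inter_left _ subset_union_left)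
        · simpa [Real.volume_Ico] using measure_mono (μ := volume) hXc
        · exact measure_mono hYc
    _ = volume (X ∪ Y) + ENNReal.ofReal r := by
        rw [add_right_comm, measure_inter_add_sdiff _ measurableSet_Iio]

def SeparatedBy (δ : ℝ) (s : Set ℝ) : Prop := ∀ x ∈ s, ∀ y ∈ s, x < y → x + δ ≤ y

lemma SeparatedBy.mono {δ : ℝ} {s t : Set ℝ} (h : SeparatedBy δ t) (hst : s ⊆ t) :
    SeparatedBy δ s :=
  fun x hx y hy => h x (hst hx) y (hst hy)

lemma ofReal_le_volume_biUnion_Ico {δ : ℝ} (hδ0 : 0 ≤ δ) (hδ1 : δ ≤ 1) {P : Finset ℝ}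
    (hP : P.Nonempty) (hsep : SeparatedBy δ P) :
    ENNReal.ofReal (δ * (P.card - 1) + 1) ≤ volume (⋃ p ∈ P, Ico p (p + 1)) := by
  induction P using Finset.induction_on_max with
  | empty => simp at hP
  | insert a s has ih =>
    rw [Finset.set_biUnion_insert, union_comm]
    rcases s.eq_empty_or_nonempty with rfl | hs
    · simp [Real.volume_Ico]
    have hsep' : SeparatedBy δ s := hsep.mono (by simp)
    have hX : (⋃ p ∈ s, Ico p (p + 1)) ⊆ Iio (a + (1 - δ)) := by
      simp only [iUnion_subset_iff]
      intro p hp x hx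
      have hpa := hsep p (by simp [hp]) a (by simp) (has p hp)
      exact mem_Iio.2 (by linarith [hx.2])
    have key := volume_add_volume_le_volume_union_add hX
      (Ico_subset_Ici_self : Ico a (a + 1) ⊆ Ici a)
    rw [Real.volume_Ico, add_sub_cancel_left, ENNReal.ofReal_one] at key
    have hcard : ((insert a s).card : ℝ) = s.card + 1 := by
      rw [Finset.card_insert_of_notMem fun h => lt_irrefl a (has a h), Nat.cast_succ]
    have hs1 : (1 : ℝ) ≤ s.card := by exact_mod_cast hs.card_pos
    refine ENNReal.le_of_add_le_add_right ENNReal.ofReal_ne_top (le_trans ?_ key)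
    calc ENNReal.ofReal (δ * ((insert a s).card - 1) + 1) + ENNReal.ofReal (1 - δ)
        = ENNReal.ofReal (δ * (s.card - 1) + 1) + ENNReal.ofReal 1 := by
          rw [← ENNReal.ofReal_add (by nlinarith) (by linarith),
            ← ENNReal.ofReal_add (by nlinarith) zero_le_one, hcard]
          ring_nf
      _ ≤ volume (⋃ p ∈ s, Ico p (p + 1)) + 1 := by
          rw [ENNReal.ofReal_one]; gcongr; exact ih hs hsep'

lemma SeparatedBy.image_affine {δ c : ℝ} {s : Set ℝ} (h : SeparatedBy δ s) (hc : 0 ≤ c) (d : ℝ) :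
    SeparatedBy (c * δ) ((fun x => c * x + d) '' s) := by
  rintro _ ⟨x, hx, rfl⟩ _ ⟨y, hy, rfl⟩ hxy
  have := mul_le_mul_of_nonneg_left (h x hx y hy (lt_of_mul_lt_mul_left (by linarith) hc)) hc
  linarith

lemma ofReal_le_volume_biUnion_Ico_union {δ ε c : ℝ} (hδ0 : 0 ≤ δ) (hδ1 : δ ≤ 1) (hε0 : 0 ≤ ε)
    (hε1 : ε ≤ 1) {P Q : Finset ℝ} (hP : P.Nonempty) (hQ : Q.Nonempty)
    (hPsep : SeparatedBy δ P) (hQsep : SeparatedBy ε Q)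
    (hPc : ∀ p ∈ P, p ≤ c) (hQc : ∀ q ∈ Q, c ≤ q) :
    ENNReal.ofReal (δ * (P.card - 1) + ε * (Q.card - 1) + 1) ≤
      volume (⋃ p ∈ P ∪ Q, Ico p (p + 1)) := by
  have hX : (⋃ p ∈ P, Ico p (p + 1)) ⊆ Iio (c + 1) := by
    simp only [iUnion_subset_iff]
    exact fun p hp x hx => mem_Iio.2 (by linarith [hx.2, hPc p hp])
  have hY : (⋃ q ∈ Q, Ico q (q + 1)) ⊆ Ici c := by
    simp only [iUnion_subset_iff]
    exact fun q hq x hx => mem_Ici.2 ((hQc q hq).trans hx.1)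
  have hP1 : (1 : ℝ) ≤ P.card := by exact_mod_cast hP.card_pos
  have hQ1 : (1 : ℝ) ≤ Q.card := by exact_mod_cast hQ.card_pos
  rw [Finset.set_biUnion_union]
  refine ENNReal.le_of_add_le_add_right ENNReal.ofReal_ne_top
    (le_trans ?_ (volume_add_volume_le_volume_union_add hX hY))
  calc ENNReal.ofReal (δ * (P.card - 1) + ε * (Q.card - 1) + 1) + ENNReal.ofReal 1
      = ENNReal.ofReal (δ * (P.card - 1) + 1) + ENNReal.ofReal (ε * (Q.card - 1) + 1) := by
        rw [← ENNReal.ofReal_add (by nlinarith) zero_le_one,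
          ← ENNReal.ofReal_add (by nlinarith) (by nlinarith)]
        ring_nf
    _ ≤ _ := add_le_add (ofReal_le_volume_biUnion_Ico hδ0 hδ1 hP hPsep)
        (ofReal_le_volume_biUnion_Ico hε0 hε1 hQ hQsep)

lemma ofReal_le_volume_biUnion_Ico_convexCombination {lam : ℝ} (hlam : lam ∈ Ioo (0 : ℝ) 1)
    {A B : Finset ℝ} (hA : A.Nonempty) (hB : B.Nonempty)
    (hAsep : SeparatedBy 1 A) (hBsep : SeparatedBy 1 B) :
    ENNReal.ofReal ((1 - lam) * A.card + lam * B.card) ≤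
      volume (⋃ p ∈ (1 - lam) • A + lam • B, Ico p (p + 1)) := by
  obtain ⟨hl0, hl1⟩ := hlam
  set a := A.max' hA
  set b := B.min' hB
  set P := A.image fun x => (1 - lam) * x + lam * b
  set Q := B.image fun y => (1 - lam) * a + lam * y
  have hPA : P.card = A.card :=
    Finset.card_image_of_injective _ fun x y h => by simpa [sub_ne_zero.2 hl1.ne'] using h
  have hQB : Q.card = B.card :=
    Finset.card_image_of_injective _ fun x y h => by simpa [hl0.ne'] using h
  have hPsep : SeparatedBy (1 - lam) P := by
    simpa [P] using hAsep.image_affine (sub_nonneg.2 hl1.le) (lam * b)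
  have hQsep : SeparatedBy lam Q := by
    simpa [Q, add_comm] using hBsep.image_affine hl0.le ((1 - lam) * a)
  have hPQ : P ∪ Q ⊆ (1 - lam) • A + lam • B := by
    rintro _ hp
    rcases Finset.mem_union.1 hp with hp | hp <;> obtain ⟨x, hx, rfl⟩ := Finset.mem_image.1 hp
    · exact Finset.add_mem_add (Finset.smul_mem_smul_finset hx)
        (Finset.smul_mem_smul_finset (B.min'_mem hB))
    · exact Finset.add_mem_add (Finset.smul_mem_smul_finset (A.max'_mem hA))
        (Finset.smul_mem_smul_finset hx)
  have key := ofReal_le_volume_biUnion_Ico_union (c := (1 - lam) * a + lam * b)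
    (by linarith) (by linarith) hl0.le hl1.le (hA.image _) (hB.image _) hPsep hQsep
    (by
      simp only [Finset.mem_image, forall_exists_index, and_imp, forall_apply_eq_imp_iff₂]
      exact fun x hx => by nlinarith [A.le_max' x hx])
    (by
      simp only [Finset.mem_image, forall_exists_index, and_imp, forall_apply_eq_imp_iff₂]
      exact fun y hy => by nlinarith [B.min'_le y hy])
  rw [hPA, hQB] at key
  calc ENNReal.ofReal ((1 - lam) * A.card + lam * B.card)
      = ENNReal.ofReal ((1 - lam) * (A.card - 1) + lam * (B.card - 1) + 1) := by ring_nf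
    _ ≤ _ := key.trans <| measure_mono <| iUnion₂_subset fun p hp =>
        subset_biUnion_of_mem (u := fun p => Ico p (p + 1)) (hPQ hp)

lemma volume_biUnion_Ico_le_latticeEnum1 {V : Set ℝ} (hV : Bornology.IsBounded V)
    {P : Finset ℝ} (hPV : ↑P ⊆ V) :
    volume (⋃ p ∈ P, Ico p (p + 1)) ≤ latticeEnum1 (V + Ioo (-1) 1) := by
  have hT := (hV.add (Metric.isBounded_Ioo (-1 : ℝ) 1)).finite_inter_intCast
  calc volume (⋃ p ∈ P, Ico p (p + 1))
      ≤ volume (⋃ t ∈ hT.toFinset, Ico t (t + 1)) := by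
        refine measure_mono ?_
        simp only [iUnion_subset_iff]
        intro p hp x hx
        have hfl := Int.floor_le x
        have hlt := Int.lt_floor_add_one x
        refine mem_biUnion (x := (⌊x⌋ : ℝ)) ?_ ⟨hfl, hlt⟩
        refine hT.mem_toFinset.2 ⟨?_, ⌊x⌋, rfl⟩
        exact ⟨p, hPV hp, ⌊x⌋ - p, ⟨by linarith [hx.1], by linarith [hx.2]⟩, by ring⟩
    _ ≤ ∑ t ∈ hT.toFinset, volume (Ico t (t + 1)) := measure_biUnion_finset_le _ _
    _ = latticeEnum1 (V + Ioo (-1) 1) := by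
        simp [Real.volume_Ico, latticeEnum1, ncard_eq_toFinset_card _ hT]

lemma exists_finset_separatedBy_one_latticeEnum1_le_card {K : Set ℝ} (hK : K.Nonempty)
    (hKb : Bornology.IsBounded K) :
    ∃ A : Finset ℝ, A.Nonempty ∧ ↑A ⊆ K ∧ SeparatedBy 1 A ∧ latticeEnum1 K ≤ A.card := by
  have hT := hKb.finite_inter_intCast
  rcases (K ∩ {x : ℝ | ∃ z : ℤ, x = z}).eq_empty_or_nonempty with hTe | hTne
  · obtain ⟨k, hk⟩ := hK
    refine ⟨{k}, Finset.singleton_nonempty k, by simpa using hk, ?_, by simp [latticeEnum1, hTe]⟩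
    simp [SeparatedBy]
  · refine ⟨hT.toFinset, by simpa using hTne, by simp, ?_, (ncard_eq_toFinset_card _ hT).le⟩
    simp only [SeparatedBy, Finite.coe_toFinset, mem_inter_iff]
    rintro _ ⟨-, z, rfl⟩ _ ⟨-, w, rfl⟩ hzw
    exact_mod_cast Int.add_one_le_iff.2 (Int.cast_lt.1 hzw)

theorem stmt4 (lam : ℝ) (hlam : lam ∈ Set.Ioo (0 : ℝ) 1)
    (K L : Set ℝ) (hK : K.Nonempty) (hL : L.Nonempty)
    (hKb : Bornology.IsBounded K) (hLb : Bornology.IsBounded L) :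
    (latticeEnum1 ((1 - lam) • K + lam • L + Set.Ioo (-1 : ℝ) 1) : ℝ) ≥
      (1 - lam) * (latticeEnum1 K : ℝ) + lam * (latticeEnum1 L : ℝ) := by
  obtain ⟨A, hA, hAK, hAsep, hKA⟩ := exists_finset_separatedBy_one_latticeEnum1_le_card hK hKb
  obtain ⟨B, hB, hBL, hBsep, hLB⟩ := exists_finset_separatedBy_one_latticeEnum1_le_card hL hLb
  have hsub : ↑((1 - lam) • A + lam • B) ⊆ (1 - lam) • K + lam • L := by
    rw [Finset.coe_add, Finset.coe_smul_finset, Finset.coe_smul_finset]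
    exact add_subset_add (smul_set_mono hAK) (smul_set_mono hBL)
  have hvol := (ofReal_le_volume_biUnion_Ico_convexCombination hlam hA hB hAsep hBsep).trans
    (volume_biUnion_Ico_le_latticeEnum1 ((hKb.smul₀ _).add (hLb.smul₀ _)) hsub)
  rw [← ENNReal.ofReal_natCast, ENNReal.ofReal_le_ofReal_iff (Nat.cast_nonneg _)] at hvol
  have hcard : (1 - lam) * (latticeEnum1 K : ℝ) + lam * (latticeEnum1 L : ℝ) ≤
      (1 - lam) * A.card + lam * B.card := by
    gcongr <;> linarith [hlam.1, hlam.2]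
  linarith
end

section
/- Let λ ∈ (0,1), K, L ⊂ ℝⁿ non-empty bounded sets, and −1/n ≤ p ≤ ∞. Then G_n((1−λ)K + λL + (−1,1)ⁿ) ≥ M_{p/(np+1)}(G_n(K), G_n(L); λ). -/
open Set
open scoped Pointwise Classical

/-- The λ-weighted `p`-mean of two non-negative reals, with parameter `p ∈ ℝ ∪ {±∞}`,
vanishing whenever one of the arguments vanishes. -/
noncomputable def pMean (p : EReal) (lam a b : ℝ) : ℝ :=
  if a = 0 ∨ b = 0 then 0
  else if p = ⊤ then max a b
  else if p = ⊥ then min a b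
  else if p = 0 then a ^ (1 - lam) * b ^ lam
  else ((1 - lam) * a ^ p.toReal + lam * b ^ p.toReal) ^ (1 / p.toReal)

/-- The exponent `p/(np+1)`, interpreted as `1/n` for `p = ∞` and `-∞` for `p = -1/n`. -/
noncomputable def conjExp (n : ℕ) (p : EReal) : EReal :=
  if p = ⊤ then ((1 / n : ℝ) : EReal)
  else if p = ((-(1 / n : ℝ) : ℝ) : EReal) then ⊥
  else ((p.toReal / (n * p.toReal + 1) : ℝ) : EReal)

/-- The lattice point enumerator: number of integer points of `M ⊆ ℝⁿ`. -/
noncomputable def latticeEnum (n : ℕ) (M : Set (Fin n → ℝ)) : ℕ :=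
  (M ∩ {x : Fin n → ℝ | ∀ i, ∃ z : ℤ, x i = z}).ncard

open MeasureTheory

/-!
For `p ≥ -1/n` the exponent `p/(np+1)` is at most `1/n`, so by the monotonicity of power means it
suffices to prove `G_n((1-λ)K + λL + (-1,1)ⁿ)^{1/n} ≥ (1-λ) G_n(K)^{1/n} + λ G_n(L)^{1/n}`.
Put the cube `a + (0,1]ⁿ` on every lattice point `a` of `K`, resp. of `L`, and scale by `1-λ`,
resp. `λ`: this gives two finite unions of disjoint boxes of volumes `(1-λ)ⁿ G_n(K)` and
`λⁿ G_n(L)`. Their Minkowski sum lies in `(1-λ)K + λL + (0,1]ⁿ`, and a point `x` of that set lies in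
the unit cube `z + (0,1]ⁿ` with `z = ⌈x⌉ - 1` a lattice point of `(1-λ)K + λL + (-1,1)ⁿ`, so the
volume of the sum is at most `G_n((1-λ)K + λL + (-1,1)ⁿ)`. It remains to apply the Brunn–Minkowski
inequality to the two unions of boxes.

That inequality is proved by the Hadwiger–Ohmann induction on the total number of boxes. Two
disjoint boxes of the first set are separated by a coordinate hyperplane; cut the first set along
it and, by the intermediate value theorem, the second set along a parallel hyperplane into parts of
the same volume ratio. Both pairs of parts have fewer boxes in total, and the sums of the two pairs
lie on opposite sides of a hyperplane, so the inequalities for the two pairs add up to the one for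
the original sets. Two single boxes are handled by the AM-GM inequality.
-/

section Boxes

variable {ι : Type*}

/-- Half-open boxes make the cuts `{x | x i ≤ t}`, `{x | t < x i}` exact partitions, so that no
null sets have to be discarded. -/
def halfOpenBox (l u : ι → ℝ) : Set (ι → ℝ) := univ.pi fun i => Ioc (l i) (u i)

theorem halfOpenBox_nonempty_iff {l u : ι → ℝ} :
    (halfOpenBox l u).Nonempty ↔ ∀ i, l i < u i := by
  simp [halfOpenBox, univ_pi_nonempty_iff]

theorem measurableSet_halfOpenBox [Fintype ι] (l u : ι → ℝ) : MeasurableSet (halfOpenBox l u) :=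
  .univ_pi fun _ => measurableSet_Ioc

theorem volume_halfOpenBox [Fintype ι] (l u : ι → ℝ) :
    volume (halfOpenBox l u) = ∏ i, ENNReal.ofReal (u i - l i) :=
  Real.volume_pi_Ioc

theorem isBounded_halfOpenBox [Fintype ι] (l u : ι → ℝ) : Bornology.IsBounded (halfOpenBox l u) :=
  (Metric.isBounded_Icc l u).subset fun _ hx =>
    ⟨fun i => (hx i (mem_univ i)).1.le, fun i => (hx i (mem_univ i)).2⟩

theorem halfOpenBox_inter_le (l u : ι → ℝ) (i : ι) (t : ℝ) :
    halfOpenBox l u ∩ {x | x i ≤ t} = halfOpenBox l (Function.update u i (min (u i) t)) := by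
  ext x
  simp only [halfOpenBox, mem_inter_iff, mem_univ_pi, mem_ofPred_eq, mem_Ioc]
  constructor
  · rintro ⟨hx, hxt⟩ j
    rcases eq_or_ne j i with rfl | hj
    · simpa using ⟨(hx j).1, (hx j).2, hxt⟩
    · simpa [hj] using hx j
  · intro hx
    refine ⟨fun j => ?_, ((le_min_iff.mp (by simpa using (hx i).2)).2)⟩
    rcases eq_or_ne j i with rfl | hj
    · simpa using ⟨(hx j).1, (le_min_iff.mp (by simpa using (hx j).2)).1⟩
    · simpa [hj] using hx j

theorem halfOpenBox_inter_lt (l u : ι → ℝ) (i : ι) (t : ℝ) :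
    halfOpenBox l u ∩ {x | t < x i} = halfOpenBox (Function.update l i (max (l i) t)) u := by
  ext x
  simp only [halfOpenBox, mem_inter_iff, mem_univ_pi, mem_ofPred_eq, mem_Ioc]
  constructor
  · rintro ⟨hx, hxt⟩ j
    rcases eq_or_ne j i with rfl | hj
    · simpa using ⟨⟨(hx j).1, hxt⟩, (hx j).2⟩
    · simpa [hj] using hx j
  · intro hx
    refine ⟨fun j => ?_, ((max_lt_iff.mp (by simpa using (hx i).1)).2)⟩
    rcases eq_or_ne j i with rfl | hj
    · simpa using ⟨(max_lt_iff.mp (by simpa using (hx j).1)).1, (hx j).2⟩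
    · simpa [hj] using hx j

theorem exists_le_of_disjoint_halfOpenBox {l u l' u' : ι → ℝ} (hlu : ∀ i, l i < u i)
    (hlu' : ∀ i, l' i < u' i) (h : Disjoint (halfOpenBox l u) (halfOpenBox l' u')) :
    ∃ i, u i ≤ l' i ∨ u' i ≤ l i := by
  by_contra! hsep
  exact h.ne_of_mem (a := fun i => min (u i) (u' i)) (b := fun i => min (u i) (u' i))
    (fun i _ => ⟨lt_min (hlu i) (hsep i).2, min_le_left _ _⟩)
    (fun i _ => ⟨lt_min (hsep i).1 (hlu' i), min_le_right _ _⟩) rfl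

theorem smul_halfOpenBox {α : ℝ} (hα : 0 < α) (l u : ι → ℝ) :
    α • halfOpenBox l u = halfOpenBox (α • l) (α • u) := by
  rw [halfOpenBox, smul_set_pi₀ hα.ne']
  congr 1
  funext i
  exact LinearOrderedField.smul_Ioc hα

theorem Ioc_subset_Ioc_add_Ioc {a b c d : ℝ} (hab : a < b) (hcd : c < d) :
    Ioc (a + c) (b + d) ⊆ Ioc a b + Ioc c d := by
  rintro z ⟨hz₁, hz₂⟩
  by_cases hbz : b + c < z
  · exact ⟨b, ⟨hab, le_rfl⟩, z - b, ⟨by linarith, by linarith⟩, by ring⟩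
  · obtain ⟨y, hcy, hy⟩ := exists_between (lt_min hcd (show c < z - a by linarith))
    exact ⟨z - y, ⟨by linarith [min_le_right d (z - a)], by linarith⟩, y,
      ⟨hcy, hy.le.trans (min_le_left _ _)⟩, by ring⟩

theorem halfOpenBox_subset_add {l u l' u' : ι → ℝ} (hlu : ∀ i, l i < u i)
    (hlu' : ∀ i, l' i < u' i) :
    halfOpenBox (l + l') (u + u') ⊆ halfOpenBox l u + halfOpenBox l' u' := by
  intro x hx
  choose y hy z hz hyz using fun i => Ioc_subset_Ioc_add_Ioc (hlu i) (hlu' i) (hx i (mem_univ i))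
  exact ⟨y, fun i _ => hy i, z, fun i _ => hz i, funext hyz⟩

end Boxes

section UnionOfBoxes

variable {ι : Type*}

def IsUnionOfBoxes (k : ℕ) (X : Set (ι → ℝ)) : Prop :=
  ∃ B : Finset ((ι → ℝ) × (ι → ℝ)), B.card ≤ k ∧
    (B : Set ((ι → ℝ) × (ι → ℝ))).PairwiseDisjoint (fun b => halfOpenBox b.1 b.2) ∧
    X = ⋃ b ∈ B, halfOpenBox b.1 b.2

theorem IsUnionOfBoxes.mono {k k' : ℕ} {X : Set (ι → ℝ)} (h : IsUnionOfBoxes k X) (hk : k ≤ k') :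
    IsUnionOfBoxes k' X :=
  let ⟨B, hB, hdisj, hX⟩ := h
  ⟨B, hB.trans hk, hdisj, hX⟩

theorem isUnionOfBoxes_biUnion {B : Finset ((ι → ℝ) × (ι → ℝ))}
    (hB : (B : Set ((ι → ℝ) × (ι → ℝ))).PairwiseDisjoint (fun b => halfOpenBox b.1 b.2))
    (f : (ι → ℝ) × (ι → ℝ) → (ι → ℝ) × (ι → ℝ))
    (hf : ∀ b ∈ B, halfOpenBox (f b).1 (f b).2 ⊆ halfOpenBox b.1 b.2) :
    IsUnionOfBoxes B.card (⋃ b ∈ B, halfOpenBox (f b).1 (f b).2) := by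
  refine ⟨B.image f, Finset.card_image_le, ?_, by rw [Finset.set_biUnion_finset_image]⟩
  rintro _ hp _ hq hpq
  obtain ⟨b, hb, rfl⟩ := Finset.mem_image.mp hp
  obtain ⟨c, hc, rfl⟩ := Finset.mem_image.mp hq
  exact (hB hb hc fun hbc => hpq (hbc ▸ rfl)).mono (hf b hb) (hf c hc)

theorem isUnionOfBoxes_biUnion_of_eq_empty {B : Finset ((ι → ℝ) × (ι → ℝ))}
    (hB : (B : Set ((ι → ℝ) × (ι → ℝ))).PairwiseDisjoint (fun b => halfOpenBox b.1 b.2))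
    (f : (ι → ℝ) × (ι → ℝ) → (ι → ℝ) × (ι → ℝ))
    (hf : ∀ b ∈ B, halfOpenBox (f b).1 (f b).2 ⊆ halfOpenBox b.1 b.2) {c : (ι → ℝ) × (ι → ℝ)}
    (hc : c ∈ B) (hfc : halfOpenBox (f c).1 (f c).2 = ∅) :
    IsUnionOfBoxes (B.card - 1) (⋃ b ∈ B, halfOpenBox (f b).1 (f b).2) := by
  have hunion : ⋃ b ∈ B, halfOpenBox (f b).1 (f b).2 =
      ⋃ b ∈ B.erase c, halfOpenBox (f b).1 (f b).2 := by
    conv_lhs => rw [← Finset.insert_erase hc]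
    rw [Finset.set_biUnion_insert, hfc, empty_union]
  rw [hunion, ← Finset.card_erase_of_mem hc]
  exact isUnionOfBoxes_biUnion (hB.subset (Finset.coe_subset.mpr (B.erase_subset c))) f
    fun b hb => hf b (Finset.mem_of_mem_erase hb)

theorem IsUnionOfBoxes.inter_le {k : ℕ} {X : Set (ι → ℝ)} (h : IsUnionOfBoxes k X) (i : ι)
    (t : ℝ) : IsUnionOfBoxes k (X ∩ {x | x i ≤ t}) := by
  obtain ⟨B, hk, hB, rfl⟩ := h
  simp_rw [iUnion₂_inter, halfOpenBox_inter_le]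
  exact (isUnionOfBoxes_biUnion hB (fun b => (b.1, Function.update b.2 i (min (b.2 i) t)))
    fun b _ => (halfOpenBox_inter_le b.1 b.2 i t).symm ▸ inter_subset_left).mono hk

theorem IsUnionOfBoxes.inter_lt {k : ℕ} {X : Set (ι → ℝ)} (h : IsUnionOfBoxes k X) (i : ι)
    (t : ℝ) : IsUnionOfBoxes k (X ∩ {x | t < x i}) := by
  obtain ⟨B, hk, hB, rfl⟩ := h
  simp_rw [iUnion₂_inter, halfOpenBox_inter_lt]
  exact (isUnionOfBoxes_biUnion hB (fun b => (Function.update b.1 i (max (b.1 i) t), b.2))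
    fun b _ => (halfOpenBox_inter_lt b.1 b.2 i t).symm ▸ inter_subset_left).mono hk

theorem exists_split_of_eq_biUnion_halfOpenBox {k : ℕ} {X : Set (ι → ℝ)}
    {B : Finset ((ι → ℝ) × (ι → ℝ))} (hk : B.card ≤ k)
    (hB : (B : Set ((ι → ℝ) × (ι → ℝ))).PairwiseDisjoint (fun b => halfOpenBox b.1 b.2))
    (hX : X = ⋃ b ∈ B, halfOpenBox b.1 b.2) {b c : (ι → ℝ) × (ι → ℝ)} (hb : b ∈ B) (hc : c ∈ B)
    (hbne : (halfOpenBox b.1 b.2).Nonempty) (hcne : (halfOpenBox c.1 c.2).Nonempty) {i : ι}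
    (hbc : b.2 i ≤ c.1 i) :
    ∃ t, ∃ k' < k, IsUnionOfBoxes k' (X ∩ {x | x i ≤ t}) ∧
      IsUnionOfBoxes k' (X ∩ {x | t < x i}) ∧
      (X ∩ {x | x i ≤ t}).Nonempty ∧ (X ∩ {x | t < x i}).Nonempty := by
  subst hX
  obtain ⟨x, hx⟩ := hbne
  obtain ⟨y, hy⟩ := hcne
  have hcard : B.card - 1 < k := by have := Finset.card_pos.mpr ⟨b, hb⟩; omega
  refine ⟨b.2 i, B.card - 1, hcard, ?_, ?_, ⟨x, mem_biUnion hb hx, (hx i (mem_univ i)).2⟩,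
    ⟨y, mem_biUnion hc hy, hbc.trans_lt (hy i (mem_univ i)).1⟩⟩
  · simp_rw [iUnion₂_inter, halfOpenBox_inter_le]
    refine isUnionOfBoxes_biUnion_of_eq_empty hB
      (fun b' => (b'.1, Function.update b'.2 i (min (b'.2 i) (b.2 i))))
      (fun b' _ => (halfOpenBox_inter_le b'.1 b'.2 i _).symm ▸ inter_subset_left) hc ?_
    rw [← halfOpenBox_inter_le, eq_empty_iff_forall_notMem]
    exact fun z hz => (hz.1 i (mem_univ i)).1.not_ge (hz.2.trans hbc)
  · simp_rw [iUnion₂_inter, halfOpenBox_inter_lt]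
    refine isUnionOfBoxes_biUnion_of_eq_empty hB
      (fun b' => (Function.update b'.1 i (max (b'.1 i) (b.2 i)), b'.2))
      (fun b' _ => (halfOpenBox_inter_lt b'.1 b'.2 i _).symm ▸ inter_subset_left) hb ?_
    rw [← halfOpenBox_inter_lt, eq_empty_iff_forall_notMem]
    exact fun z hz => (hz.1 i (mem_univ i)).2.not_gt hz.2

theorem IsUnionOfBoxes.eq_halfOpenBox_or_exists_split {k : ℕ} {X : Set (ι → ℝ)}
    (h : IsUnionOfBoxes k X) (hne : X.Nonempty) :
    (∃ l u, (∀ i, l i < u i) ∧ X = halfOpenBox l u) ∨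
    ∃ i t, ∃ k' < k, IsUnionOfBoxes k' (X ∩ {x | x i ≤ t}) ∧
      IsUnionOfBoxes k' (X ∩ {x | t < x i}) ∧
      (X ∩ {x | x i ≤ t}).Nonempty ∧ (X ∩ {x | t < x i}).Nonempty := by
  obtain ⟨B, hk, hB, hX⟩ := h
  by_cases hsplit : ∃ b ∈ B, ∃ c ∈ B, b ≠ c ∧
      (halfOpenBox b.1 b.2).Nonempty ∧ (halfOpenBox c.1 c.2).Nonempty
  · obtain ⟨b, hb, c, hc, hbc, hbne, hcne⟩ := hsplit
    obtain ⟨i, hi | hi⟩ := exists_le_of_disjoint_halfOpenBox (halfOpenBox_nonempty_iff.mp hbne)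
      (halfOpenBox_nonempty_iff.mp hcne) (hB hb hc hbc)
    · exact .inr ⟨i, exists_split_of_eq_biUnion_halfOpenBox hk hB hX hb hc hbne hcne hi⟩
    · exact .inr ⟨i, exists_split_of_eq_biUnion_halfOpenBox hk hB hX hc hb hcne hbne hi⟩
  · push Not at hsplit
    subst hX
    obtain ⟨x, hx⟩ := hne
    obtain ⟨b, hb, hxb⟩ := mem_iUnion₂.mp hx
    refine .inl ⟨b.1, b.2, halfOpenBox_nonempty_iff.mp ⟨x, hxb⟩,
      subset_antisymm (iUnion₂_subset fun c hc y hy => ?_) fun y hy => mem_iUnion₂.mpr ⟨b, hb, hy⟩⟩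
    by_cases hcb : c = b
    · exact hcb ▸ hy
    · exact absurd hxb (eq_empty_iff_forall_notMem.mp (hsplit c hc b hb hcb ⟨y, hy⟩) x)

theorem IsUnionOfBoxes.isBounded [Fintype ι] {k : ℕ} {X : Set (ι → ℝ)} (h : IsUnionOfBoxes k X) :
    Bornology.IsBounded X := by
  obtain ⟨B, -, -, rfl⟩ := h
  exact (Bornology.isBounded_biUnion_finset B).mpr fun b _ => isBounded_halfOpenBox b.1 b.2

theorem IsUnionOfBoxes.volume_pos [Fintype ι] {k : ℕ} {X : Set (ι → ℝ)} (h : IsUnionOfBoxes k X)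
    (hne : X.Nonempty) : 0 < volume X := by
  obtain ⟨B, -, -, rfl⟩ := h
  obtain ⟨x, hx⟩ := hne
  obtain ⟨b, hb, hxb⟩ := mem_iUnion₂.mp hx
  have hlu := halfOpenBox_nonempty_iff.mp ⟨x, hxb⟩
  refine lt_of_lt_of_le ?_ (measure_mono (subset_biUnion_of_mem hb))
  rw [volume_halfOpenBox]
  exact pos_iff_ne_zero.mpr <| Finset.prod_ne_zero_iff.mpr fun i _ =>
    (ENNReal.ofReal_pos.mpr (sub_pos.mpr (hlu i))).ne'

end UnionOfBoxes

section Slices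

variable {ι : Type*}

theorem measure_inter_le_add_measure_inter_lt (μ : Measure (ι → ℝ)) (X : Set (ι → ℝ)) (i : ι)
    (t : ℝ) : μ (X ∩ {x | x i ≤ t}) + μ (X ∩ {x | t < x i}) = μ X := by
  simpa only [sdiff_eq, compl_ofPred, not_le] using
    measure_inter_add_sdiff X (measurableSet_le (measurable_pi_apply i) measurable_const) (μ := μ)

theorem add_inter_le_subset (X Y : Set (ι → ℝ)) (i : ι) (t s : ℝ) :
    X ∩ {x | x i ≤ t} + Y ∩ {x | x i ≤ s} ⊆ (X + Y) ∩ {x | x i ≤ t + s} := by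
  rintro _ ⟨x, ⟨hx, hxt⟩, y, ⟨hy, hys⟩, rfl⟩
  exact ⟨add_mem_add hx hy, show x i + y i ≤ t + s from add_le_add hxt hys⟩

theorem add_inter_lt_subset (X Y : Set (ι → ℝ)) (i : ι) (t s : ℝ) :
    X ∩ {x | t < x i} + Y ∩ {x | s < x i} ⊆ (X + Y) ∩ {x | t + s < x i} := by
  rintro _ ⟨x, ⟨hx, hxt⟩, y, ⟨hy, hys⟩, rfl⟩
  exact ⟨add_mem_add hx hy, show t + s < x i + y i from add_lt_add hxt hys⟩

variable [Fintype ι]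

theorem Bornology.IsBounded.exists_subset_halfOpenBox {Y : Set (ι → ℝ)}
    (hY : Bornology.IsBounded Y) : ∃ L U : ι → ℝ, L ≤ U ∧ Y ⊆ halfOpenBox L U := by
  obtain ⟨r, hr, hYr⟩ := hY.subset_closedBall_lt 0 0
  refine ⟨fun _ => -r - 1, fun _ => r, fun _ => by linarith, fun x hx i _ => ?_⟩
  have hxi := (norm_le_pi_norm x i).trans (mem_closedBall_zero_iff.mp (hYr hx))
  rw [Real.norm_eq_abs, abs_le] at hxi
  exact ⟨by linarith [hxi.1], hxi.2⟩

theorem toReal_volume_inter_le_add_toReal_volume_inter_lt {X : Set (ι → ℝ)} (hX : volume X ≠ ⊤)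
    (i : ι) (t : ℝ) :
    (volume (X ∩ {x | x i ≤ t})).toReal + (volume (X ∩ {x | t < x i})).toReal =
      (volume X).toReal := by
  rw [← ENNReal.toReal_add (ne_top_of_le_ne_top hX (measure_mono inter_subset_left))
    (ne_top_of_le_ne_top hX (measure_mono inter_subset_left)),
    measure_inter_le_add_measure_inter_lt]

theorem toReal_volume_inter_le_inter_lt_le {Y : Set (ι → ℝ)} {L U : ι → ℝ} (hLU : L ≤ U)
    (hY : Y ⊆ halfOpenBox L U) (i : ι) {s s' : ℝ} (hss' : s ≤ s') :
    (volume (Y ∩ {x | x i ≤ s'} ∩ {x | s < x i})).toReal ≤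
      (s' - s) * ∏ j ∈ Finset.univ \ {i}, (U j - L j) := by
  have hsub : Y ∩ {x | x i ≤ s'} ∩ {x | s < x i} ⊆
      halfOpenBox (Function.update L i s) (Function.update U i s') := by
    rintro x ⟨⟨hx, hxs'⟩, hxs⟩ j -
    rcases eq_or_ne j i with rfl | hj
    · simpa using ⟨hxs, hxs'⟩
    · simpa [hj] using hY hx j (mem_univ j)
  have hle : Function.update L i s ≤ Function.update U i s' := by
    intro j
    rcases eq_or_ne j i with rfl | hj
    · simpa using hss'
    · simpa [hj] using hLU j
  calc _ ≤ (volume (halfOpenBox (Function.update L i s) (Function.update U i s'))).toReal :=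
        ENNReal.toReal_mono (isBounded_halfOpenBox _ _).measure_lt_top.ne (measure_mono hsub)
    _ = ∏ j, Function.update (U - L) i (s' - s) j := by
        rw [halfOpenBox, Real.volume_pi_Ioc_toReal hle]
        refine Finset.prod_congr rfl fun j _ => ?_
        rcases eq_or_ne j i with rfl | hj
        · simp
        · simp [hj]
    _ = _ := Finset.prod_update_of_mem (Finset.mem_univ i) _ _

theorem continuous_toReal_volume_inter_le {Y : Set (ι → ℝ)} (hY : Bornology.IsBounded Y)
    (i : ι) : Continuous fun s => (volume (Y ∩ {x | x i ≤ s})).toReal := by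
  obtain ⟨L, U, hLU, hYLU⟩ := hY.exists_subset_halfOpenBox
  have hfin : ∀ Z ⊆ Y, volume Z ≠ ⊤ := fun Z hZ =>
    ne_top_of_le_ne_top hY.measure_lt_top.ne (measure_mono hZ)
  set C := ∏ j ∈ Finset.univ \ {i}, (U j - L j)
  have hC : 0 ≤ C := Finset.prod_nonneg fun j _ => sub_nonneg.mpr (hLU j)
  refine (LipschitzWith.of_le_add_mul' C fun s s' => ?_).continuous
  rw [Real.dist_eq]
  rcases le_total s s' with h | h
  · have hmono : (volume (Y ∩ {x | x i ≤ s})).toReal ≤ (volume (Y ∩ {x | x i ≤ s'})).toReal :=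
      ENNReal.toReal_mono (hfin _ inter_subset_left)
        (measure_mono (inter_subset_inter_right _ fun x hx => le_trans hx h))
    nlinarith [abs_nonneg (s - s')]
  · have hsplit := measure_inter_le_add_measure_inter_lt volume (Y ∩ {x | x i ≤ s}) i s'
    have hss : {x : ι → ℝ | x i ≤ s} ∩ {x | x i ≤ s'} = {x | x i ≤ s'} :=
      inter_eq_right.mpr fun x (hx : x i ≤ s') => hx.trans h
    rw [inter_assoc, hss] at hsplit
    rw [← hsplit, ENNReal.toReal_add (hfin _ inter_subset_left)
      (hfin _ (inter_subset_left.trans inter_subset_left)), abs_of_nonneg (sub_nonneg.mpr h)]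
    linarith [toReal_volume_inter_le_inter_lt_le hLU hYLU i h]

theorem exists_toReal_volume_inter_le_eq {Y : Set (ι → ℝ)} (hY : Bornology.IsBounded Y) (i : ι)
    {c : ℝ} (hc : c ∈ Icc 0 (volume Y).toReal) :
    ∃ s, (volume (Y ∩ {x | x i ≤ s})).toReal = c := by
  obtain ⟨L, U, hLU, hYLU⟩ := hY.exists_subset_halfOpenBox
  have h₀ : Y ∩ {x | x i ≤ L i} = ∅ :=
    eq_empty_iff_forall_notMem.mpr fun x hx => (hYLU hx.1 i (mem_univ i)).1.not_ge hx.2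
  have h₁ : Y ∩ {x | x i ≤ U i} = Y := inter_eq_left.mpr fun x hx => (hYLU hx i (mem_univ i)).2
  have hivt := intermediate_value_Icc (hLU i) (continuous_toReal_volume_inter_le hY i).continuousOn
  simp only [h₀, h₁, measure_empty, ENNReal.toReal_zero] at hivt
  obtain ⟨s, -, hs⟩ := hivt hc
  exact ⟨s, hs⟩

end Slices

section BrunnMinkowski

variable {ι : Type*} [Fintype ι]

def BrunnMinkowskiIneq (X Y : Set (ι → ℝ)) : Prop :=
  ((volume X).toReal ^ (Fintype.card ι : ℝ)⁻¹ + (volume Y).toReal ^ (Fintype.card ι : ℝ)⁻¹) ^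
    Fintype.card ι ≤ (volume (X + Y)).toReal

theorem BrunnMinkowskiIneq.symm {X Y : Set (ι → ℝ)} (h : BrunnMinkowskiIneq X Y) :
    BrunnMinkowskiIneq Y X := by
  rwa [BrunnMinkowskiIneq, add_comm, add_comm Y]

variable [Nonempty ι]

theorem prod_rpow_inv_add_prod_rpow_inv_le {a b : ι → ℝ} (ha : ∀ i, 0 < a i)
    (hb : ∀ i, 0 < b i) :
    (∏ i, a i) ^ (Fintype.card ι : ℝ)⁻¹ + (∏ i, b i) ^ (Fintype.card ι : ℝ)⁻¹ ≤
      (∏ i, (a i + b i)) ^ (Fintype.card ι : ℝ)⁻¹ := by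
  set d := Fintype.card ι
  have hd : (0 : ℝ) < d := Nat.cast_pos.mpr Fintype.card_pos
  have hab i : 0 < a i + b i := add_pos (ha i) (hb i)
  have hP : 0 < (∏ i, (a i + b i)) ^ (d : ℝ)⁻¹ :=
    Real.rpow_pos_of_pos (Finset.prod_pos fun i _ => hab i) _
  have amgm (c : ι → ℝ) (hc : ∀ i, 0 < c i) :
      (∏ i, c i) ^ (d : ℝ)⁻¹ ≤ (∑ i, c i / (a i + b i)) / d * (∏ i, (a i + b i)) ^ (d : ℝ)⁻¹ := by
    have h := Real.geom_mean_le_arith_mean Finset.univ (fun _ => 1) (fun i => c i / (a i + b i))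
      (by simp) (by simpa using Fintype.card_pos) fun i _ => (div_pos (hc i) (hab i)).le
    simp only [Real.rpow_one, one_mul, Finset.sum_const, Finset.card_univ, nsmul_eq_mul,
      mul_one] at h
    rwa [Finset.prod_div_distrib, Real.div_rpow (Finset.prod_nonneg fun i _ => (hc i).le)
      (Finset.prod_pos fun i _ => hab i).le,
      div_le_iff₀ hP] at h
  have hsum : (∑ i, a i / (a i + b i)) / d + (∑ i, b i / (a i + b i)) / d = 1 := by
    rw [← add_div, ← Finset.sum_add_distrib, div_eq_one_iff_eq hd.ne']
    simp [← add_div, div_self (hab _).ne', d]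
  nlinarith [amgm a ha, amgm b hb]

theorem brunnMinkowskiIneq_halfOpenBox {l u l' u' : ι → ℝ} (hlu : ∀ i, l i < u i)
    (hlu' : ∀ i, l' i < u' i) :
    BrunnMinkowskiIneq (halfOpenBox l u) (halfOpenBox l' u') := by
  have hvol (l u : ι → ℝ) (hlu : ∀ i, l i < u i) :
      (volume (halfOpenBox l u)).toReal = ∏ i, (u i - l i) :=
    Real.volume_pi_Ioc_toReal fun i => (hlu i).le
  have hsum : (volume (halfOpenBox (l + l') (u + u'))).toReal ≤
      (volume (halfOpenBox l u + halfOpenBox l' u')).toReal :=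
    ENNReal.toReal_mono
      ((isBounded_halfOpenBox l u).add (isBounded_halfOpenBox l' u')).measure_lt_top.ne
      (measure_mono (halfOpenBox_subset_add hlu hlu'))
  refine le_trans ?_ hsum
  rw [hvol l u hlu, hvol l' u' hlu', hvol (l + l') (u + u') fun i => add_lt_add (hlu i) (hlu' i)]
  calc _ ≤ ((∏ i, ((u i - l i) + (u' i - l' i))) ^ (Fintype.card ι : ℝ)⁻¹) ^ Fintype.card ι :=
        pow_le_pow_left₀ (add_nonneg
          (Real.rpow_nonneg (Finset.prod_nonneg fun i _ => (sub_pos.mpr (hlu i)).le) _)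
          (Real.rpow_nonneg (Finset.prod_nonneg fun i _ => (sub_pos.mpr (hlu' i)).le) _))
          (prod_rpow_inv_add_prod_rpow_inv_le
          (fun i => sub_pos.mpr (hlu i)) (fun i => sub_pos.mpr (hlu' i))) _
    _ = _ := by
        rw [Real.rpow_inv_natCast_pow (Finset.prod_nonneg fun i _ => by linarith [hlu i, hlu' i])
          Fintype.card_ne_zero]
        exact Finset.prod_congr rfl fun i _ => by simp only [Pi.add_apply]; ring

theorem BrunnMinkowskiIneq.of_split {X Y : Set (ι → ℝ)} (hX : volume X ≠ ⊤)
    (hY : volume Y ≠ ⊤) (hXY : volume (X + Y) ≠ ⊤) (i : ι) {t s θ : ℝ} (hθ : θ ∈ Icc 0 1)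
    (hXt : (volume (X ∩ {x | x i ≤ t})).toReal = θ * (volume X).toReal)
    (hYs : (volume (Y ∩ {x | x i ≤ s})).toReal = θ * (volume Y).toReal)
    (hlow : BrunnMinkowskiIneq (X ∩ {x | x i ≤ t}) (Y ∩ {x | x i ≤ s}))
    (hup : BrunnMinkowskiIneq (X ∩ {x | t < x i}) (Y ∩ {x | s < x i})) :
    BrunnMinkowskiIneq X Y := by
  set A := (volume X).toReal
  set B := (volume Y).toReal
  have hscale (r : ℝ) (hr : 0 ≤ r) :
      ((r * A) ^ (Fintype.card ι : ℝ)⁻¹ + (r * B) ^ (Fintype.card ι : ℝ)⁻¹) ^ Fintype.card ι =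
        r * (A ^ (Fintype.card ι : ℝ)⁻¹ + B ^ (Fintype.card ι : ℝ)⁻¹) ^ Fintype.card ι := by
    rw [Real.mul_rpow hr (by positivity), Real.mul_rpow hr (by positivity), ← mul_add, mul_pow,
      Real.rpow_inv_natCast_pow hr Fintype.card_ne_zero]
  have hXt' : (volume (X ∩ {x | t < x i})).toReal = (1 - θ) * A := by
    linarith [toReal_volume_inter_le_add_toReal_volume_inter_lt hX i t]
  have hYs' : (volume (Y ∩ {x | s < x i})).toReal = (1 - θ) * B := by
    linarith [toReal_volume_inter_le_add_toReal_volume_inter_lt hY i s]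
  have hsum := toReal_volume_inter_le_add_toReal_volume_inter_lt hXY i (t + s)
  have hlow' := hlow.trans (ENNReal.toReal_mono (ne_top_of_le_ne_top hXY
    (measure_mono inter_subset_left)) (measure_mono (add_inter_le_subset X Y i t s)))
  have hup' := hup.trans (ENNReal.toReal_mono (ne_top_of_le_ne_top hXY
    (measure_mono inter_subset_left)) (measure_mono (add_inter_lt_subset X Y i t s)))
  rw [hXt, hYs, hscale θ hθ.1] at hlow'
  rw [hXt', hYs', hscale (1 - θ) (sub_nonneg.mpr hθ.2)] at hup'
  rw [BrunnMinkowskiIneq]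
  linarith

theorem BrunnMinkowskiIneq.of_forall_split {X Y : Set (ι → ℝ)} (hXb : Bornology.IsBounded X)
    (hYb : Bornology.IsBounded Y) (hY : 0 < volume Y) {i : ι} {t : ℝ}
    (hX₁ : 0 < volume (X ∩ {x | x i ≤ t})) (hX₂ : 0 < volume (X ∩ {x | t < x i}))
    (h : ∀ s, 0 < volume (Y ∩ {x | x i ≤ s}) → 0 < volume (Y ∩ {x | s < x i}) →
      BrunnMinkowskiIneq (X ∩ {x | x i ≤ t}) (Y ∩ {x | x i ≤ s}) ∧
        BrunnMinkowskiIneq (X ∩ {x | t < x i}) (Y ∩ {x | s < x i})) :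
    BrunnMinkowskiIneq X Y := by
  have hXfin := (hXb.measure_lt_top (μ := volume)).ne
  have hYfin := (hYb.measure_lt_top (μ := volume)).ne
  have hsplitX := toReal_volume_inter_le_add_toReal_volume_inter_lt hXfin i t
  have hsplitY := toReal_volume_inter_le_add_toReal_volume_inter_lt hYfin i
  have htoReal_pos {Z : Set (ι → ℝ)} (hZX : Z ⊆ X) (hZ : 0 < volume Z) : 0 < (volume Z).toReal :=
    ENNReal.toReal_pos hZ.ne' (ne_top_of_le_ne_top hXfin (measure_mono hZX))
  have hA₁ := htoReal_pos inter_subset_left hX₁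
  have hA₂ := htoReal_pos inter_subset_left hX₂
  have hB := ENNReal.toReal_pos hY.ne' hYfin
  set θ := (volume (X ∩ {x | x i ≤ t})).toReal / (volume X).toReal
  have hθ₀ : 0 < θ := div_pos hA₁ (by linarith)
  have hθ₁ : θ < 1 := (div_lt_one (by linarith)).mpr (by linarith)
  obtain ⟨s, hs⟩ := exists_toReal_volume_inter_le_eq hYb i (c := θ * (volume Y).toReal)
    ⟨by positivity, mul_le_of_le_one_left hB.le hθ₁.le⟩
  have hs₁ : 0 < volume (Y ∩ {x | x i ≤ s}) :=
    (ENNReal.toReal_pos_iff.mp (by rw [hs]; positivity)).1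
  have hs₂ : 0 < volume (Y ∩ {x | s < x i}) :=
    (ENNReal.toReal_pos_iff.mp (by nlinarith [hsplitY s])).1
  obtain ⟨hlow, hup⟩ := h s hs₁ hs₂
  exact hlow.of_split hXfin hYfin ((hXb.add hYb).measure_lt_top.ne) i ⟨hθ₀.le, hθ₁.le⟩
    (by rw [div_mul_cancel₀ _ (by linarith)]) hs hup

theorem IsUnionOfBoxes.brunnMinkowskiIneq {k₁ k₂ : ℕ} {X Y : Set (ι → ℝ)}
    (hX : IsUnionOfBoxes k₁ X) (hY : IsUnionOfBoxes k₂ Y) (hXne : X.Nonempty) (hYne : Y.Nonempty) :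
    BrunnMinkowskiIneq X Y := by
  induction hk : k₁ + k₂ using Nat.strong_induction_on generalizing k₁ k₂ X Y with
  | _ k ih =>
  rcases hX.eq_halfOpenBox_or_exists_split hXne with
    ⟨l, u, hlu, rfl⟩ | ⟨i, t, k', hk', hX₁, hX₂, hX₁ne, hX₂ne⟩
  · rcases hY.eq_halfOpenBox_or_exists_split hYne with
      ⟨l', u', hlu', rfl⟩ | ⟨i, s, k', hk', hY₁, hY₂, hY₁ne, hY₂ne⟩
    · exact brunnMinkowskiIneq_halfOpenBox hlu hlu'
    · refine (BrunnMinkowskiIneq.of_forall_split hY.isBounded hX.isBounded (hX.volume_pos hXne)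
        (hY₁.volume_pos hY₁ne) (hY₂.volume_pos hY₂ne) fun t ht₁ ht₂ => ⟨?_, ?_⟩).symm
      · exact (ih (k₁ + k') (by omega) (hX.inter_le i t) hY₁ (nonempty_of_measure_ne_zero ht₁.ne')
          hY₁ne rfl).symm
      · exact (ih (k₁ + k') (by omega) (hX.inter_lt i t) hY₂ (nonempty_of_measure_ne_zero ht₂.ne')
          hY₂ne rfl).symm
  · refine BrunnMinkowskiIneq.of_forall_split hX.isBounded hY.isBounded (hY.volume_pos hYne)
      (hX₁.volume_pos hX₁ne) (hX₂.volume_pos hX₂ne) fun s hs₁ hs₂ => ⟨?_, ?_⟩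
    · exact ih (k' + k₂) (by omega) hX₁ (hY.inter_le i s) hX₁ne
        (nonempty_of_measure_ne_zero hs₁.ne') rfl
    · exact ih (k' + k₂) (by omega) hX₂ (hY.inter_lt i s) hX₂ne
        (nonempty_of_measure_ne_zero hs₂.ne') rfl

end BrunnMinkowski

section Lattice

variable {ι : Type*}

theorem IsUnionOfBoxes.smul {k : ℕ} {X : Set (ι → ℝ)} (h : IsUnionOfBoxes k X) {r : ℝ}
    (hr : 0 < r) : IsUnionOfBoxes k (r • X) := by
  obtain ⟨B, hk, hB, rfl⟩ := h
  refine ⟨B.image (r • ·), Finset.card_image_le.trans hk, ?_, ?_⟩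
  · rintro _ hp _ hq hpq
    obtain ⟨b, hb, rfl⟩ := Finset.mem_image.mp hp
    obtain ⟨c, hc, rfl⟩ := Finset.mem_image.mp hq
    simp only [Function.onFun, Prod.smul_fst, Prod.smul_snd, ← smul_halfOpenBox hr]
    exact (disjoint_image_iff (smul_right_injective _ hr.ne')).mpr
      (hB hb hc fun hbc => hpq (hbc ▸ rfl))
  · simp_rw [smul_set_iUnion₂, Finset.set_biUnion_finset_image, smul_halfOpenBox hr]
    rfl

def integerPoints (ι : Type*) : Set (ι → ℝ) := {x | ∀ i, ∃ z : ℤ, x i = z}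

theorem integerPoints_eq_span [Fintype ι] :
    integerPoints ι = Submodule.span ℤ (range (Pi.basisFun ℝ ι)) := by
  ext x
  simp only [integerPoints, mem_ofPred_eq, SetLike.mem_coe, Submodule.mem_span_range_iff_exists_fun]
  constructor
  · intro h
    choose z hz using h
    exact ⟨z, funext fun j => by simp [hz, Finset.sum_apply, Pi.single_apply]⟩
  · rintro ⟨c, rfl⟩ j
    exact ⟨c j, by simp [Finset.sum_apply, Pi.single_apply]⟩

theorem Bornology.IsBounded.inter_integerPoints_finite [Fintype ι] {S : Set (ι → ℝ)}
    (hS : Bornology.IsBounded S) : (S ∩ integerPoints ι).Finite := by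
  rw [integerPoints_eq_span]
  exact ZSpan.setFinite_inter _ hS

theorem pairwiseDisjoint_halfOpenBox_integerPoints :
    (integerPoints ι).PairwiseDisjoint fun a => halfOpenBox a (a + 1) := by
  intro a ha b hb hab
  obtain ⟨i, hi⟩ := Function.ne_iff.mp hab
  obtain ⟨m, hm⟩ := ha i
  obtain ⟨n, hn⟩ := hb i
  refine disjoint_left.mpr fun x hxa hxb => hi ?_
  have hxa := hxa i (mem_univ i)
  have hxb := hxb i (mem_univ i)
  simp only [Pi.add_apply, Pi.one_apply, mem_Ioc, hm, hn] at hxa hxb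
  have hmn : m < n + 1 := by exact_mod_cast (show (m : ℝ) < n + 1 by linarith)
  have hnm : n < m + 1 := by exact_mod_cast (show (n : ℝ) < m + 1 by linarith)
  rw [hm, hn, show m = n by omega]

theorem add_halfOpenBox_zero_one (A : Set (ι → ℝ)) :
    A + halfOpenBox 0 1 = ⋃ a ∈ A, halfOpenBox a (a + 1) := by
  ext x
  simp only [mem_add, mem_iUnion₂, halfOpenBox, mem_univ_pi, mem_Ioc, Pi.add_apply,
    Pi.zero_apply, Pi.one_apply, exists_prop]
  constructor
  · rintro ⟨a, ha, q, hq, rfl⟩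
    exact ⟨a, ha, fun i => ⟨by simp; linarith [(hq i).1], by simp; linarith [(hq i).2]⟩⟩
  · rintro ⟨a, ha, hx⟩
    exact ⟨a, ha, x - a, fun i => ⟨by simp [(hx i).1], by simp; linarith [(hx i).2]⟩,
      add_sub_cancel _ _⟩

theorem isUnionOfBoxes_add_halfOpenBox_zero_one {A : Finset (ι → ℝ)}
    (hA : (A : Set (ι → ℝ)) ⊆ integerPoints ι) :
    IsUnionOfBoxes A.card ((A : Set (ι → ℝ)) + halfOpenBox 0 1) := by
  refine ⟨A.image fun a => (a, a + 1), Finset.card_image_le, ?_, ?_⟩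
  · rintro _ hp _ hq hpq
    obtain ⟨a, ha, rfl⟩ := Finset.mem_image.mp hp
    obtain ⟨b, hb, rfl⟩ := Finset.mem_image.mp hq
    exact pairwiseDisjoint_halfOpenBox_integerPoints (hA ha) (hA hb) fun hab => hpq (hab ▸ rfl)
  · rw [add_halfOpenBox_zero_one, Finset.set_biUnion_finset_image, Finset.set_biUnion_coe]

variable [Fintype ι]

theorem volume_add_halfOpenBox_zero_one {A : Finset (ι → ℝ)}
    (hA : (A : Set (ι → ℝ)) ⊆ integerPoints ι) :
    volume ((A : Set (ι → ℝ)) + halfOpenBox 0 1) = A.card := by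
  rw [add_halfOpenBox_zero_one, Finset.set_biUnion_coe, measure_biUnion_finset
    (pairwiseDisjoint_halfOpenBox_integerPoints.subset hA) fun a _ => measurableSet_halfOpenBox _ _]
  simp [volume_halfOpenBox]

theorem toReal_volume_le_ncard_integerPoints {W M : Set (ι → ℝ)} (hW : Bornology.IsBounded W)
    (hM : M ⊆ W + halfOpenBox 0 1) :
    (volume M).toReal ≤
      ((W + {x : ι → ℝ | ∀ i, x i ∈ Ioo (-1 : ℝ) 1}) ∩ integerPoints ι).ncard := by
  set S := (W + {x : ι → ℝ | ∀ i, x i ∈ Ioo (-1 : ℝ) 1}) ∩ integerPoints ι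
  have hS : S.Finite := (hW.add ((isBounded_halfOpenBox (-1) 1).subset fun x hx i _ =>
    ⟨(hx i).1, (hx i).2.le⟩)).inter_integerPoints_finite
  have hcover : M ⊆ ⋃ z ∈ hS.toFinset, halfOpenBox z (z + 1) := by
    intro x hx
    obtain ⟨w, hw, q, hq, rfl⟩ := hM hx
    have hq i := hq i (mem_univ i)
    have hceil i := Int.le_ceil (w i + q i)
    have hceil' i := Int.ceil_lt_add_one (w i + q i)
    refine mem_iUnion₂.mpr ⟨fun i => ⌈w i + q i⌉ - 1, hS.mem_toFinset.mpr
      ⟨⟨w, hw, fun i => ⌈w i + q i⌉ - 1 - w i, fun i => ⟨?_, ?_⟩, add_sub_cancel _ _⟩,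
        fun i => ⟨⌈w i + q i⌉ - 1, by push_cast; rfl⟩⟩, fun i _ => ⟨?_, ?_⟩⟩ <;>
    simp only [Pi.add_apply, Pi.zero_apply, Pi.one_apply, mem_Ioc] at hq ⊢ <;>
    linarith [hq i, hceil i, hceil' i]
  have hvol : volume (⋃ z ∈ hS.toFinset, halfOpenBox z (z + 1)) ≤ hS.toFinset.card :=
    (measure_biUnion_finset_le _ _).trans (by simp [volume_halfOpenBox])
  calc (volume M).toReal ≤ hS.toFinset.card :=
        ENNReal.toReal_le_of_le_ofReal (Nat.cast_nonneg _)
          (by simpa using (measure_mono hcover).trans hvol)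
    _ = S.ncard := by rw [ncard_eq_toFinset_card S hS]

theorem toReal_volume_smul (r : ℝ) (S : Set (ι → ℝ)) :
    (volume (r • S)).toReal = |r| ^ Fintype.card ι * (volume S).toReal := by
  rw [Measure.addHaar_smul, Module.finrank_fintype_fun_eq_card, ENNReal.toReal_mul,
    ENNReal.toReal_ofReal (abs_nonneg _), abs_pow]

theorem brunnMinkowski_ncard_integerPoints [Nonempty ι] {K L : Set (ι → ℝ)}
    (hK : Bornology.IsBounded K) (hL : Bornology.IsBounded L)
    (hKne : (K ∩ integerPoints ι).Nonempty) (hLne : (L ∩ integerPoints ι).Nonempty) {lam : ℝ} (hlam : lam ∈ Ioo 0 1) :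
    ((1 - lam) * ((K ∩ integerPoints ι).ncard : ℝ) ^ (Fintype.card ι : ℝ)⁻¹ +
        lam * ((L ∩ integerPoints ι).ncard : ℝ) ^ (Fintype.card ι : ℝ)⁻¹) ^ Fintype.card ι ≤
      (((1 - lam) • K + lam • L + {x : ι → ℝ | ∀ i, x i ∈ Ioo (-1 : ℝ) 1}) ∩
        integerPoints ι).ncard := by
  have hμ : 0 < 1 - lam := sub_pos.mpr hlam.2
  set Q : Set (ι → ℝ) := halfOpenBox 0 1
  have hQ : Q.Nonempty := halfOpenBox_nonempty_iff.mpr fun _ => zero_lt_one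
  set A := hK.inter_integerPoints_finite.toFinset
  set B := hL.inter_integerPoints_finite.toFinset
  have hA : (A : Set (ι → ℝ)) = K ∩ integerPoints ι := Finite.coe_toFinset _
  have hB : (B : Set (ι → ℝ)) = L ∩ integerPoints ι := Finite.coe_toFinset _
  have hAℤ : (A : Set (ι → ℝ)) ⊆ integerPoints ι := hA.subset.trans inter_subset_right
  have hBℤ : (B : Set (ι → ℝ)) ⊆ integerPoints ι := hB.subset.trans inter_subset_right
  have hroot (r : ℝ) (hr : 0 < r) (C : Finset (ι → ℝ)) (hC : (C : Set (ι → ℝ)) ⊆ integerPoints ι) :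
      (volume (r • ((C : Set (ι → ℝ)) + Q))).toReal ^ (Fintype.card ι : ℝ)⁻¹ =
        r * ((C : Set (ι → ℝ)).ncard : ℝ) ^ (Fintype.card ι : ℝ)⁻¹ := by
    rw [toReal_volume_smul, volume_add_halfOpenBox_zero_one hC, ncard_coe_finset,
      ENNReal.toReal_natCast, abs_of_pos hr, Real.mul_rpow (by positivity) (by positivity),
      Real.pow_rpow_inv_natCast hr.le Fintype.card_ne_zero]
  have hsum : (1 - lam) • ((A : Set (ι → ℝ)) + Q) + lam • ((B : Set (ι → ℝ)) + Q) ⊆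
      (1 - lam) • K + lam • L + Q := by
    have hconv : Convex ℝ Q := convex_pi fun _ _ => convex_Ioc _ _
    rw [smul_add, smul_add, add_add_add_comm, ← hconv.add_smul hμ.le hlam.1.le, sub_add_cancel,
      one_smul]
    gcongr
    · exact hA.subset.trans inter_subset_left
    · exact hB.subset.trans inter_subset_left
  have hX := (isUnionOfBoxes_add_halfOpenBox_zero_one hAℤ).smul hμ
  have hY := (isUnionOfBoxes_add_halfOpenBox_zero_one hBℤ).smul hlam.1
  have hbm := hX.brunnMinkowskiIneq hY ((hA ▸ hKne).add hQ).smul_set ((hB ▸ hLne).add hQ).smul_set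
  rw [BrunnMinkowskiIneq, hroot _ hμ _ hAℤ, hroot _ hlam.1 _ hBℤ, hA, hB] at hbm
  rw [hA, hB] at hsum
  exact hbm.trans (toReal_volume_le_ncard_integerPoints ((hK.smul₀ _).add (hL.smul₀ _)) hsum)

end Lattice

section Means

variable {lam a b : ℝ}

theorem pMean_bot (ha : 0 < a) (hb : 0 < b) : pMean ⊥ lam a b = min a b := by
  simp [pMean, ha.ne', hb.ne']

theorem pMean_zero (ha : 0 < a) (hb : 0 < b) : pMean 0 lam a b = a ^ (1 - lam) * b ^ lam := by
  simp [pMean, ha.ne', hb.ne']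

theorem pMean_coe {r : ℝ} (hr : r ≠ 0) (ha : 0 < a) (hb : 0 < b) :
    pMean r lam a b = ((1 - lam) * a ^ r + lam * b ^ r) ^ (1 / r) := by
  simp [pMean, ha.ne', hb.ne', hr]

theorem min_le_geom_mean (hlam : lam ∈ Icc 0 1) (ha : 0 < a) (hb : 0 < b) :
    min a b ≤ a ^ (1 - lam) * b ^ lam := by
  calc min a b = min a b ^ (1 - lam) * min a b ^ lam := by
        rw [← Real.rpow_add (lt_min ha hb), sub_add_cancel, Real.rpow_one]
    _ ≤ a ^ (1 - lam) * b ^ lam := by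
        gcongr
        · exact sub_nonneg.mpr hlam.2
        · exact min_le_left a b
        · exact hlam.1
        · exact min_le_right a b

theorem geom_mean_le_power_mean (hlam : lam ∈ Icc 0 1) (ha : 0 < a) (hb : 0 < b) {s : ℝ}
    (hs : 0 < s) : a ^ (1 - lam) * b ^ lam ≤ ((1 - lam) * a ^ s + lam * b ^ s) ^ (1 / s) := by
  have hamgm := Real.geom_mean_le_arith_mean2_weighted (sub_nonneg.mpr hlam.2) hlam.1
    (Real.rpow_nonneg ha.le s) (Real.rpow_nonneg hb.le s) (sub_add_cancel 1 lam)
  calc a ^ (1 - lam) * b ^ lam = ((a ^ s) ^ (1 - lam) * (b ^ s) ^ lam) ^ (1 / s) := by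
        rw [← Real.rpow_mul ha.le, ← Real.rpow_mul hb.le, Real.mul_rpow (by positivity)
          (by positivity), ← Real.rpow_mul ha.le, ← Real.rpow_mul hb.le]
        field_simp
    _ ≤ _ := Real.rpow_le_rpow (by positivity) hamgm (by positivity)

theorem power_mean_le_geom_mean (hlam : lam ∈ Icc 0 1) (ha : 0 < a) (hb : 0 < b) {r : ℝ}
    (hr : r < 0) : ((1 - lam) * a ^ r + lam * b ^ r) ^ (1 / r) ≤ a ^ (1 - lam) * b ^ lam := by
  have hamgm := Real.geom_mean_le_arith_mean2_weighted (sub_nonneg.mpr hlam.2) hlam.1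
    (Real.rpow_nonneg ha.le r) (Real.rpow_nonneg hb.le r) (sub_add_cancel 1 lam)
  calc ((1 - lam) * a ^ r + lam * b ^ r) ^ (1 / r)
      ≤ ((a ^ r) ^ (1 - lam) * (b ^ r) ^ lam) ^ (1 / r) :=
        Real.rpow_le_rpow_of_nonpos (by positivity) hamgm (one_div_neg.mpr hr).le
    _ = a ^ (1 - lam) * b ^ lam := by
        rw [← Real.rpow_mul ha.le, ← Real.rpow_mul hb.le, Real.mul_rpow (by positivity)
          (by positivity), ← Real.rpow_mul ha.le, ← Real.rpow_mul hb.le, mul_one_div,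
          mul_one_div, mul_div_cancel_left₀ _ hr.ne, mul_div_cancel_left₀ _ hr.ne]

theorem power_mean_le_power_mean (hlam : lam ∈ Icc 0 1) (ha : 0 < a) (hb : 0 < b) {r s : ℝ}
    (hr : 0 < r) (hrs : r ≤ s) :
    ((1 - lam) * a ^ r + lam * b ^ r) ^ (1 / r) ≤ ((1 - lam) * a ^ s + lam * b ^ s) ^ (1 / s) := by
  have hjensen := (convexOn_rpow ((one_le_div hr).mpr hrs)).2 (Real.rpow_nonneg ha.le r)
    (Real.rpow_nonneg hb.le r) (sub_nonneg.mpr hlam.2) hlam.1 (sub_add_cancel 1 lam)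
  simp only [smul_eq_mul, ← Real.rpow_mul ha.le, ← Real.rpow_mul hb.le,
    mul_div_cancel₀ _ hr.ne'] at hjensen
  have hM : 0 ≤ (1 - lam) * a ^ r + lam * b ^ r := add_nonneg
    (mul_nonneg (sub_nonneg.mpr hlam.2) (Real.rpow_nonneg ha.le r))
    (mul_nonneg hlam.1 (Real.rpow_nonneg hb.le r))
  calc ((1 - lam) * a ^ r + lam * b ^ r) ^ (1 / r)
      = (((1 - lam) * a ^ r + lam * b ^ r) ^ (s / r)) ^ (1 / s) := by
        rw [← Real.rpow_mul hM, div_mul_div_comm, mul_one,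
          div_mul_cancel_right₀ (hr.trans_le hrs).ne', one_div]
    _ ≤ _ := Real.rpow_le_rpow (Real.rpow_nonneg hM _) hjensen
        (one_div_pos.mpr (hr.trans_le hrs)).le

theorem pMean_le_pMean_coe {p : EReal} {s : ℝ} (hps : p ≤ s) (hs : 0 < s) (hlam : lam ∈ Icc 0 1)
    (ha : 0 < a) (hb : 0 < b) : pMean p lam a b ≤ pMean s lam a b := by
  rw [pMean_coe hs.ne' ha hb]
  induction p using EReal.rec with
  | bot => exact (pMean_bot ha hb).trans_le <|
      (min_le_geom_mean hlam ha hb).trans (geom_mean_le_power_mean hlam ha hb hs)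
  | top => exact absurd hps (by simp)
  | coe r =>
    have hrs : r ≤ s := EReal.coe_le_coe_iff.mp hps
    rcases lt_trichotomy r 0 with hr | rfl | hr
    · rw [pMean_coe hr.ne ha hb]
      exact (power_mean_le_geom_mean hlam ha hb hr).trans (geom_mean_le_power_mean hlam ha hb hs)
    · rw [EReal.coe_zero, pMean_zero ha hb]
      exact geom_mean_le_power_mean hlam ha hb hs
    · rw [pMean_coe hr.ne' ha hb]
      exact power_mean_le_power_mean hlam ha hb hr hrs

theorem conjExp_le {n : ℕ} (hn : 0 < n) {p : EReal} (hp : ((-(1 / n : ℝ) : ℝ) : EReal) ≤ p) :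
    conjExp n p ≤ ((1 / n : ℝ) : EReal) := by
  unfold conjExp
  split_ifs with htop hbot
  · exact le_rfl
  · exact bot_le
  · have hnR : (0 : ℝ) < n := Nat.cast_pos.mpr hn
    induction p using EReal.rec with
    | bot => exact absurd hp (by simp)
    | top => exact absurd rfl htop
    | coe r =>
      have hr : -(1 / n : ℝ) < r := lt_of_le_of_ne (EReal.coe_le_coe_iff.mp hp)
        fun h => hbot (by rw [h])
      have hd : 0 < n * r + 1 := by
        have := mul_lt_mul_of_pos_left hr hnR
        rw [mul_neg, mul_one_div_cancel hnR.ne'] at this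
        linarith
      rw [EReal.toReal_coe, EReal.coe_le_coe_iff, div_le_div_iff₀ hd hnR]
      linarith

end Means

theorem stmt9_general (n : ℕ) (hn : 0 < n) (lam : ℝ) (hlam : lam ∈ Set.Ioo (0 : ℝ) 1)
    (K L : Set (Fin n → ℝ))
    (hKb : Bornology.IsBounded K) (hLb : Bornology.IsBounded L)
    (p : EReal) (hp : ((-(1 / n : ℝ) : ℝ) : EReal) ≤ p) :
    (latticeEnum n ((1 - lam) • K + lam • L +
        {x : Fin n → ℝ | ∀ i, x i ∈ Set.Ioo (-1 : ℝ) 1}) : ℝ) ≥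
      pMean (conjExp n p) lam (latticeEnum n K : ℝ) (latticeEnum n L : ℝ) := by
  have : Nonempty (Fin n) := ⟨⟨0, hn⟩⟩
  by_cases h0 : (latticeEnum n K : ℝ) = 0 ∨ (latticeEnum n L : ℝ) = 0
  · rw [ge_iff_le, pMean, if_pos h0]
    positivity
  push Not at h0
  have hKne : (K ∩ integerPoints (Fin n)).Nonempty :=
    nonempty_of_ncard_ne_zero (by exact_mod_cast h0.1)
  have hLne : (L ∩ integerPoints (Fin n)).Nonempty :=
    nonempty_of_ncard_ne_zero (by exact_mod_cast h0.2)
  have ha := (Nat.cast_nonneg _).lt_of_ne' h0.1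
  have hb := (Nat.cast_nonneg _).lt_of_ne' h0.2
  calc pMean (conjExp n p) lam (latticeEnum n K) (latticeEnum n L)
      ≤ pMean (1 / n : ℝ) lam (latticeEnum n K) (latticeEnum n L) :=
        pMean_le_pMean_coe (conjExp_le hn hp) (by positivity) ⟨hlam.1.le, hlam.2.le⟩ ha hb
    _ = ((1 - lam) * (latticeEnum n K : ℝ) ^ (n : ℝ)⁻¹ +
          lam * (latticeEnum n L : ℝ) ^ (n : ℝ)⁻¹) ^ n := by
        rw [pMean_coe (by positivity) ha hb, one_div_one_div, one_div, Real.rpow_natCast]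
    _ ≤ _ := by
        have h := brunnMinkowski_ncard_integerPoints hKb hLb hKne hLne hlam
        rwa [Fintype.card_fin] at h

theorem stmt9 (n : ℕ) (hn : 0 < n) (lam : ℝ) (hlam : lam ∈ Set.Ioo (0 : ℝ) 1)
    (K L : Set (Fin n → ℝ)) (hK : K.Nonempty) (hL : L.Nonempty)
    (hKb : Bornology.IsBounded K) (hLb : Bornology.IsBounded L)
    (p : EReal) (hp : ((-(1 / n : ℝ) : ℝ) : EReal) ≤ p) :
    (latticeEnum n ((1 - lam) • K + lam • L +
        {x : Fin n → ℝ | ∀ i, x i ∈ Set.Ioo (-1 : ℝ) 1}) : ℝ) ≥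
      pMean (conjExp n p) lam (latticeEnum n K : ℝ) (latticeEnum n L : ℝ) :=
  stmt9_general n hn lam hlam K L hKb hLb p hp
end

section
/- Let λ ∈ (0,1) and K, L ⊂ ℝⁿ be non-empty bounded sets. Then G_n((1−λ)K + λL + (−1,1)ⁿ) ≥ G_n(K)^{1−λ} · G_n(L)^{λ}. -/
open Set
open scoped Pointwise

/-!
Write `α = 1 - λ`, `β = λ`. In dimension one, for finite nonempty `F, G ⊆ ℤ` at least
`α |F| + β |G|` integers lie within distance one of `α F + β G`: removing the largest element of
`G` (or of `F`) lowers the top point `x = α max F + β max G` by at least `β` (or `α`), which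
uncovers that many integers up to the change of the defect `⌈x⌉ - x`. Applied to the level sets
of functions on `ℤ` and integrated over the level, this gives a discrete Prékopa–Leindler
inequality `∑ h ≥ (∑ f)^α (∑ g)^β` whenever `h s ≥ (f t)^α (g u)^β` for `|s - (α t + β u)| < 1`
(the weighted AM–GM inequality turns the arithmetic mean into the geometric one).
For `A, B ⊆ ℤⁿ⁺¹` it is applied with `f, g` the sizes of the fibers of `A, B` over the first
coordinate and `h s` the size of the set given by induction for the best pair of fibers
over `s`.
-/

lemma Int.abs_sub_lt_one_of_mem_Ioc {x : ℝ} {m t : ℤ} (hm : ⌊x⌋ - 1 ≤ m)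
    (ht : t ∈ Finset.Ioc m ⌈x⌉) : |(t : ℝ) - x| < 1 := by
  obtain ⟨hmt, htx⟩ := Finset.mem_Ioc.mp ht
  have h₁ : (⌊x⌋ : ℝ) ≤ t := by exact_mod_cast (by omega : ⌊x⌋ ≤ t)
  have h₂ : (t : ℝ) ≤ ⌈x⌉ := by exact_mod_cast htx
  rw [abs_lt]
  constructor <;> linarith [Int.floor_le x, Int.lt_floor_add_one x, Int.ceil_lt_add_one x]

lemma Int.sub_le_card_Ioc (a b : ℤ) : ((b - a : ℤ) : ℝ) ≤ (Finset.Ioc a b).card := by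
  rw [Int.card_Ioc]
  exact_mod_cast Int.self_le_toNat (b - a)

lemma Int.mem_Icc_floor_ceil_of_abs_sub_lt_one {x : ℝ} {s : ℤ} (hs : |(s : ℝ) - x| < 1) :
    s ∈ Finset.Icc ⌊x⌋ ⌈x⌉ := by
  rw [abs_lt] at hs
  rw [Finset.mem_Icc, ← Int.lt_add_one_iff, ← Int.cast_lt (R := ℝ), Int.le_ceil_iff]
  push_cast
  constructor <;> linarith [Int.floor_le x, Int.le_ceil x]

/-- The integers uncovered when the top point moves from `xo` up to `xn`. -/
lemma exists_near_Ioc_ceil (w xo xn : ℝ) (hw : w < 1) (hd : w ≤ xn - xo) :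
    ∃ T : Finset ℤ, (∀ t ∈ T, |(t : ℝ) - xn| < 1 ∧ ⌈xo⌉ < t ∧ t ≤ ⌈xn⌉) ∧
      w + (⌈xn⌉ - xn) - (⌈xo⌉ - xo) ≤ T.card := by
  refine ⟨Finset.Ioc (max ⌈xo⌉ (⌊xn⌋ - 1)) ⌈xn⌉, fun t ht => ?_, ?_⟩
  · refine ⟨Int.abs_sub_lt_one_of_mem_Ioc (le_max_right _ _) ht, ?_, (Finset.mem_Ioc.mp ht).2⟩
    exact lt_of_le_of_lt (le_max_left _ _) (Finset.mem_Ioc.mp ht).1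
  · refine le_trans ?_ (Int.sub_le_card_Ioc _ _)
    push_cast
    rw [le_sub_iff_add_le, ← le_sub_iff_add_le']
    apply max_le <;>
      linarith [Int.le_ceil xo, Int.floor_le xn]

section OneDim

variable {α β : ℝ}

-- The integers in `α • F + β • G + (-1, 1)`.
def nearInts (α β : ℝ) (F G : Finset ℤ) : Set ℤ :=
  {s | ∃ a ∈ F, ∃ b ∈ G, |(s : ℝ) - (α * a + β * b)| < 1}

lemma nearInts_comm (F G : Finset ℤ) : nearInts α β F G = nearInts β α G F := by
  ext s
  simp only [nearInts, Set.mem_ofPred_eq, add_comm (α * _)]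
  exact ⟨fun ⟨a, ha, b, hb, h⟩ => ⟨b, hb, a, ha, h⟩, fun ⟨b, hb, a, ha, h⟩ => ⟨a, ha, b, hb, h⟩⟩

lemma nearInts_mono {F G F' G' : Finset ℤ} (hF : F ⊆ F') (hG : G ⊆ G') :
    nearInts α β F G ⊆ nearInts α β F' G' :=
  fun _ ⟨a, ha, b, hb, h⟩ => ⟨a, hF ha, b, hG hb, h⟩

/-- The 1D discrete Brunn–Minkowski bound, strengthened by the defect `⌈x⌉ - x` of the top
point `x = α max F + β max G` so that it survives removing a maximum. -/
def NearIntsBound (α β : ℝ) (F G : Finset ℤ) (x : ℝ) : Prop :=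
  ∃ S : Finset ℤ, (S : Set ℤ) ⊆ nearInts α β F G ∧ (∀ s ∈ S, s ≤ ⌈x⌉) ∧
    α * F.card + β * G.card + (⌈x⌉ - x) ≤ S.card

lemma NearIntsBound.symm {F G : Finset ℤ} {x : ℝ} (h : NearIntsBound α β F G x) :
    NearIntsBound β α G F x := by
  obtain ⟨S, hS, hle, hcard⟩ := h
  exact ⟨S, nearInts_comm (α := α) F G ▸ hS, hle, by linarith⟩

lemma nearIntsBound_of_card_eq_one (hαβ : α + β = 1) {F G : Finset ℤ} {a b : ℤ} (ha : a ∈ F)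
    (hb : b ∈ G) (hF : F.card = 1) (hG : G.card = 1) :
    NearIntsBound α β F G (α * a + β * b) := by
  set x := α * a + β * b
  refine ⟨Finset.Ioc (⌊x⌋ - 1) ⌈x⌉, fun s hs => ⟨a, ha, b, hb,
    Int.abs_sub_lt_one_of_mem_Ioc le_rfl hs⟩, fun s hs => (Finset.mem_Ioc.mp hs).2,
    le_trans ?_ (Int.sub_le_card_Ioc _ _)⟩
  push_cast [hF, hG]
  linarith [Int.floor_le x]

lemma NearIntsBound.of_erase (hβ : 0 ≤ β) (hβ1 : β < 1) {F G : Finset ℤ} {a b b' : ℤ}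
    (ha : a ∈ F) (hb : b ∈ G) (hb' : b' < b)
    (h : NearIntsBound α β F (G.erase b) (α * a + β * b')) :
    NearIntsBound α β F G (α * a + β * b) := by
  obtain ⟨S, hS, hSle, hScard⟩ := h
  have hbb' : (b' : ℝ) + 1 ≤ b := by exact_mod_cast hb'
  obtain ⟨T, hT, hTcard⟩ := exists_near_Ioc_ceil β (α * a + β * b') (α * a + β * b) hβ1
    (by nlinarith)
  have hdisj : Disjoint S T := Finset.disjoint_left.mpr fun s hsS hsT =>
    (hSle s hsS).not_gt (hT s hsT).2.1
  refine ⟨S ∪ T, ?_, fun s hs => ?_, ?_⟩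
  · rw [Finset.coe_union, Set.union_subset_iff]
    exact ⟨hS.trans (nearInts_mono subset_rfl (Finset.erase_subset _ _)),
      fun t ht => ⟨a, ha, b, hb, (hT t ht).1⟩⟩
  · rcases Finset.mem_union.mp hs with hs | hs
    · exact (hSle s hs).trans (Int.ceil_le_ceil (by nlinarith))
    · exact (hT s hs).2.2
  · have hcard : ((G.erase b).card : ℝ) + 1 = G.card := by
      exact_mod_cast Finset.card_erase_add_one hb
    have hβcard : β * (G.erase b).card + β = β * G.card := by rw [← hcard]; ring
    rw [Finset.card_union_of_disjoint hdisj, Nat.cast_add]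
    linarith

theorem nearIntsBound (hα : 0 < α) (hβ : 0 < β) (hαβ : α + β = 1) (F G : Finset ℤ)
    (hF : F.Nonempty) (hG : G.Nonempty) :
    NearIntsBound α β F G (α * F.max' hF + β * G.max' hG) := by
  induction hN : F.card + G.card using Nat.strong_induction_on generalizing F G with
  | _ N ih =>
  by_cases hG' : (G.erase (G.max' hG)).Nonempty
  · refine NearIntsBound.of_erase hβ.le (by linarith) (F.max'_mem hF) (G.max'_mem hG)
      (G.lt_max'_of_mem_erase_max' hG ((G.erase _).max'_mem hG')) (ih _ ?_ _ _ _ hG' rfl)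
    rw [← hN, ← Finset.card_erase_add_one (G.max'_mem hG)]
    omega
  by_cases hF' : (F.erase (F.max' hF)).Nonempty
  · rw [add_comm]
    refine (NearIntsBound.of_erase (α := β) hα.le (by linarith) (G.max'_mem hG) (F.max'_mem hF)
      (F.lt_max'_of_mem_erase_max' hF ((F.erase _).max'_mem hF')) ?_).symm
    rw [add_comm]
    refine (ih _ ?_ _ _ hF' _ rfl).symm
    rw [← hN, ← Finset.card_erase_add_one (F.max'_mem hF)]
    omega
  rw [Finset.not_nonempty_iff_eq_empty] at hF' hG'
  refine nearIntsBound_of_card_eq_one hαβ (F.max'_mem hF) (G.max'_mem hG) ?_ ?_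
  · rw [← Finset.card_erase_add_one (F.max'_mem hF), hF', Finset.card_empty]
  · rw [← Finset.card_erase_add_one (G.max'_mem hG), hG', Finset.card_empty]

end OneDim

section LayerCake

open MeasureTheory

variable {ι : Type*} (s : Finset ι) (φ : ι → ℝ) {M : ℝ}

lemma card_filter_mul_lt_eq_sum_indicator (hM : 0 < M) (x : ℝ) :
    ((s.filter fun i => x * M < φ i).card : ℝ) = ∑ i ∈ s, (Iio (φ i / M)).indicator 1 x := by
  rw [Finset.card_filter, Nat.cast_sum]
  refine Finset.sum_congr rfl fun i _ => ?_
  simp [Set.indicator_apply, lt_div_iff₀ hM]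

lemma integrableOn_indicator_one_Iio (q : ℝ) :
    IntegrableOn ((Iio q).indicator (1 : ℝ → ℝ)) (Ioo 0 1) :=
  (integrableOn_const (C := (1 : ℝ)) (by simp) (by simp)).indicator measurableSet_Iio

lemma integrableOn_card_filter_mul_lt (hM : 0 < M) :
    IntegrableOn (fun x => ((s.filter fun i => x * M < φ i).card : ℝ)) (Ioo 0 1) := by
  simp_rw [card_filter_mul_lt_eq_sum_indicator s φ hM]
  exact integrable_finsetSum s fun i _ => integrableOn_indicator_one_Iio _

lemma integral_card_filter_mul_lt (hM : 0 < M) (hφ : ∀ i ∈ s, 0 ≤ φ i) :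
    ∫ x in Ioo 0 1, ((s.filter fun i => x * M < φ i).card : ℝ) = ∑ i ∈ s, min (φ i / M) 1 := by
  simp_rw [card_filter_mul_lt_eq_sum_indicator s φ hM]
  rw [integral_finsetSum s fun i _ => integrableOn_indicator_one_Iio _]
  refine Finset.sum_congr rfl fun i hi => ?_
  have hinter : Iio (φ i / M) ∩ Ioo 0 1 = Ioo 0 (min (φ i / M) 1) := by
    ext x
    simp only [mem_inter_iff, mem_Iio, mem_Ioo, lt_min_iff]
    tauto
  rw [integral_indicator_one measurableSet_Iio, measureReal_restrict_apply measurableSet_Iio,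
    hinter, Real.volume_real_Ioo_of_le (by have := hφ i hi; positivity), sub_zero]

lemma weighted_sum_min_le_of_card_filter_le {ι' ι'' : Type*} {α β a b c : ℝ} {F : Finset ι}
    {G : Finset ι'} {H : Finset ι''} {f : ι → ℝ} {g : ι' → ℝ} {h : ι'' → ℝ} (ha : 0 < a)
    (hb : 0 < b) (hc : 0 < c) (hf : ∀ t ∈ F, 0 ≤ f t)
    (hg : ∀ u ∈ G, 0 ≤ g u) (hh : ∀ s ∈ H, 0 ≤ h s)
    (hlevel : ∀ x ∈ Ioo (0 : ℝ) 1,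
      α * (F.filter (x * a < f ·)).card + β * (G.filter (x * b < g ·)).card ≤
        (H.filter (x * c < h ·)).card) :
    α * ∑ t ∈ F, min (f t / a) 1 + β * ∑ u ∈ G, min (g u / b) 1 ≤ ∑ s ∈ H, min (h s / c) 1 := by
  have hIF := integrableOn_card_filter_mul_lt F f ha
  have hIG := integrableOn_card_filter_mul_lt G g hb
  have hint : ∫ x in Ioo 0 1,
      (α * (F.filter (x * a < f ·)).card + β * (G.filter (x * b < g ·)).card : ℝ) ≤
        ∫ x in Ioo 0 1, ((H.filter (x * c < h ·)).card : ℝ) :=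
    setIntegral_mono_on ((hIF.const_mul α).add (hIG.const_mul β))
      (integrableOn_card_filter_mul_lt H h hc) measurableSet_Ioo hlevel
  rwa [integral_add (hIF.const_mul α) (hIG.const_mul β), integral_const_mul, integral_const_mul,
    integral_card_filter_mul_lt F f ha hf, integral_card_filter_mul_lt G g hb hg,
    integral_card_filter_mul_lt H h hc hh] at hint

end LayerCake

section PrekopaLeindler

variable {α β : ℝ}

lemma mul_rpow_mul_mul_rpow (hαβ : α + β = 1) {x a b : ℝ} (hx : 0 ≤ x) (ha : 0 ≤ a)
    (hb : 0 ≤ b) : (x * a) ^ α * (x * b) ^ β = x * (a ^ α * b ^ β) := by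
  have hx' : x ^ α * x ^ β = x := by
    rw [← Real.rpow_add' hx (by rw [hαβ]; norm_num), hαβ, Real.rpow_one]
  rw [Real.mul_rpow hx ha, Real.mul_rpow hx hb]
  linear_combination (a ^ α * b ^ β) * hx'

variable {F G H : Finset ℤ} {f g h : ℤ → ℝ}

lemma card_filter_lt_le_of_near (hα : 0 < α) (hβ : 0 < β) (hαβ : α + β = 1)
    (hfgh : ∀ t ∈ F, ∀ u ∈ G, ∀ s : ℤ, |(s : ℝ) - (α * t + β * u)| < 1 →
      s ∈ H ∧ f t ^ α * g u ^ β ≤ h s)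
    {p q : ℝ} (hp : 0 ≤ p) (hq : 0 ≤ q) (hFp : (F.filter (p < f ·)).Nonempty)
    (hGq : (G.filter (q < g ·)).Nonempty) :
    α * (F.filter (p < f ·)).card + β * (G.filter (q < g ·)).card ≤
      (H.filter (p ^ α * q ^ β < h ·)).card := by
  obtain ⟨S, hS, -, hScard⟩ := nearIntsBound hα hβ hαβ _ _ hFp hGq
  have hSH : S ⊆ H.filter (p ^ α * q ^ β < h ·) := by
    intro s hs
    obtain ⟨t, ht, u, hu, hnear⟩ := hS hs
    rw [Finset.mem_filter] at ht hu
    obtain ⟨hsH, hle⟩ := hfgh t ht.1 u hu.1 s hnear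
    refine Finset.mem_filter.mpr ⟨hsH, lt_of_lt_of_le ?_ hle⟩
    exact mul_lt_mul'' (Real.rpow_lt_rpow hp ht.2 hα) (Real.rpow_lt_rpow hq hu.2 hβ)
      (by positivity) (by positivity)
  have hceil :=
    Int.le_ceil (α * (F.filter (p < f ·)).max' hFp + β * (G.filter (q < g ·)).max' hGq)
  have hcard : (S.card : ℝ) ≤ (H.filter (p ^ α * q ^ β < h ·)).card := by
    exact_mod_cast Finset.card_le_card hSH
  linarith

/-- A discrete Prékopa–Leindler inequality on `ℤ`. -/
theorem sum_rpow_mul_sum_rpow_le_sum (hα : 0 < α) (hβ : 0 < β) (hαβ : α + β = 1)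
    (hF : F.Nonempty) (hG : G.Nonempty) (hf : ∀ t ∈ F, 0 < f t) (hg : ∀ u ∈ G, 0 < g u)
    (hh : ∀ s ∈ H, 0 ≤ h s)
    (hfgh : ∀ t ∈ F, ∀ u ∈ G, ∀ s : ℤ, |(s : ℝ) - (α * t + β * u)| < 1 →
      s ∈ H ∧ f t ^ α * g u ^ β ≤ h s) :
    (∑ t ∈ F, f t) ^ α * (∑ u ∈ G, g u) ^ β ≤ ∑ s ∈ H, h s := by
  obtain ⟨tm, htm, hfa⟩ := F.exists_mem_eq_sup' hF f
  obtain ⟨um, hum, hgb⟩ := G.exists_mem_eq_sup' hG g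
  set a := F.sup' hF f
  set b := G.sup' hG g
  set c := a ^ α * b ^ β
  have ha : 0 < a := hfa ▸ hf tm htm
  have hb : 0 < b := hgb ▸ hg um hum
  have hc : 0 < c := by positivity
  have hlevel : ∀ x ∈ Ioo (0 : ℝ) 1,
      α * (F.filter (x * a < f ·)).card + β * (G.filter (x * b < g ·)).card ≤
        (H.filter (x * c < h ·)).card := by
    rintro x ⟨hx0, hx1⟩
    have hfilter := card_filter_lt_le_of_near (p := x * a) (q := x * b) hα hβ hαβ hfgh
      (by positivity) (by positivity)
      ⟨tm, Finset.mem_filter.mpr ⟨htm, by rw [← hfa]; nlinarith⟩⟩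
      ⟨um, Finset.mem_filter.mpr ⟨hum, by rw [← hgb]; nlinarith⟩⟩
    rwa [mul_rpow_mul_mul_rpow hαβ hx0.le ha.le hb.le] at hfilter
  have hint := weighted_sum_min_le_of_card_filter_le ha hb hc
    (fun t ht => (hf t ht).le) (fun u hu => (hg u hu).le) hh hlevel
  have hF_eq : ∑ t ∈ F, min (f t / a) 1 = (∑ t ∈ F, f t) / a := by
    rw [Finset.sum_div]
    exact Finset.sum_congr rfl fun t ht =>
      min_eq_left ((div_le_one ha).mpr (F.le_sup' f ht))
  have hG_eq : ∑ u ∈ G, min (g u / b) 1 = (∑ u ∈ G, g u) / b := by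
    rw [Finset.sum_div]
    exact Finset.sum_congr rfl fun u hu =>
      min_eq_left ((div_le_one hb).mpr (G.le_sup' g hu))
  have hP : 0 ≤ ∑ t ∈ F, f t := Finset.sum_nonneg fun t ht => (hf t ht).le
  have hQ : 0 ≤ ∑ u ∈ G, g u := Finset.sum_nonneg fun u hu => (hg u hu).le
  rw [← div_le_div_iff_of_pos_right hc]
  calc (∑ t ∈ F, f t) ^ α * (∑ u ∈ G, g u) ^ β / c
      = ((∑ t ∈ F, f t) / a) ^ α * ((∑ u ∈ G, g u) / b) ^ β := by
        rw [Real.div_rpow hP ha.le, Real.div_rpow hQ hb.le, div_mul_div_comm]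
    _ ≤ α * ((∑ t ∈ F, f t) / a) + β * ((∑ u ∈ G, g u) / b) :=
        Real.geom_mean_le_arith_mean2_weighted hα.le hβ.le (by positivity) (by positivity) hαβ
    _ ≤ ∑ s ∈ H, min (h s / c) 1 := hF_eq ▸ hG_eq ▸ hint
    _ ≤ (∑ s ∈ H, h s) / c := by
        rw [Finset.sum_div]
        exact Finset.sum_le_sum fun s _ => min_le_left _ _

end PrekopaLeindler

section MultiDim

variable {α β : ℝ} {n : ℕ}

-- The lattice points of `α • A + β • B + (-1, 1)ⁿ`.
def nearSet {ι : Type*} (α β : ℝ) (A B : Finset (ι → ℤ)) : Set (ι → ℤ) :=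
  {z | ∃ a ∈ A, ∃ b ∈ B, ∀ i, |(z i : ℝ) - (α * a i + β * b i)| < 1}

noncomputable def fiber (A : Finset (Fin (n + 1) → ℤ)) (t : ℤ) : Finset (Fin n → ℤ) :=
  A.preimage (Fin.cons (α := fun _ => ℤ) t) (Fin.cons_right_injective _).injOn

@[simp]
lemma mem_fiber {A : Finset (Fin (n + 1) → ℤ)} {t : ℤ} {y : Fin n → ℤ} :
    y ∈ fiber A t ↔ Fin.cons t y ∈ A :=
  Finset.mem_preimage

lemma fiber_nonempty_iff {A : Finset (Fin (n + 1) → ℤ)} {t : ℤ} :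
    (fiber A t).Nonempty ↔ t ∈ A.image (· 0) := by
  constructor
  · rintro ⟨y, hy⟩
    exact Finset.mem_image.mpr ⟨_, mem_fiber.mp hy, Fin.cons_zero _ _⟩
  · intro ht
    obtain ⟨z, hz, rfl⟩ := Finset.mem_image.mp ht
    exact ⟨Fin.tail z, mem_fiber.mpr (by rwa [Fin.cons_self_tail])⟩

lemma card_eq_sum_card_fiber (A : Finset (Fin (n + 1) → ℤ)) :
    A.card = ∑ t ∈ A.image (· 0), (fiber A t).card := by
  classical
  rw [Finset.card_eq_sum_card_fiberwise fun z hz => Finset.mem_image_of_mem (· 0) hz]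
  refine Finset.sum_congr rfl fun t _ => ?_
  rw [fiber, Finset.card_preimage]
  congr 1
  refine Finset.filter_congr fun z _ => ⟨?_, ?_⟩
  · rintro rfl
    exact ⟨Fin.tail z, Fin.cons_self_tail z⟩
  · rintro ⟨y, rfl⟩
    exact Fin.cons_zero _ _

lemma cons_mem_nearSet {A B : Finset (Fin (n + 1) → ℤ)} {s t u : ℤ} {y : Fin n → ℤ}
    (hs : |(s : ℝ) - (α * t + β * u)| < 1) (hy : y ∈ nearSet α β (fiber A t) (fiber B u)) :
    Fin.cons s y ∈ nearSet α β A B := by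
  obtain ⟨a, ha, b, hb, hab⟩ := hy
  refine ⟨Fin.cons t a, mem_fiber.mp ha, Fin.cons u b, mem_fiber.mp hb, fun i => ?_⟩
  cases i using Fin.cases with
  | zero => simpa using hs
  | succ j => simpa using hab j

section Step

variable (ih : ∀ A B : Finset (Fin n → ℤ), A.Nonempty → B.Nonempty →
  ∃ S : Finset (Fin n → ℤ), (S : Set (Fin n → ℤ)) ⊆ nearSet α β A B ∧
    (A.card : ℝ) ^ α * (B.card : ℝ) ^ β ≤ S.card)
include ih

lemma exists_fiber_nearSet (A B : Finset (Fin (n + 1) → ℤ)) (s : ℤ) :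
    ∃ S : Finset (Fin n → ℤ),
      (∀ y ∈ S, ∃ t u : ℤ, |(s : ℝ) - (α * t + β * u)| < 1 ∧
        y ∈ nearSet α β (fiber A t) (fiber B u)) ∧
      ∀ t ∈ (A.image (· 0) : Finset ℤ), ∀ u ∈ (B.image (· 0) : Finset ℤ),
        |(s : ℝ) - (α * t + β * u)| < 1 →
        ((fiber A t).card : ℝ) ^ α * ((fiber B u).card : ℝ) ^ β ≤ S.card := by
  set P := (A.image (· 0) ×ˢ B.image (· 0)).filter
    fun p : ℤ × ℤ => |(s : ℝ) - (α * p.1 + β * p.2)| < 1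
  by_cases hP : P.Nonempty
  · obtain ⟨p, hp, hmax⟩ := P.exists_max_image
      (fun p => ((fiber A p.1).card : ℝ) ^ α * ((fiber B p.2).card : ℝ) ^ β) hP
    obtain ⟨hpFG, hps⟩ := Finset.mem_filter.mp hp
    obtain ⟨hp1, hp2⟩ := Finset.mem_product.mp hpFG
    obtain ⟨S, hS, hScard⟩ :=
      ih _ _ (fiber_nonempty_iff.mpr hp1) (fiber_nonempty_iff.mpr hp2)
    refine ⟨S, fun y hy => ⟨p.1, p.2, hps, hS hy⟩, fun t ht u hu hs => ?_⟩
    exact (hmax (t, u) (Finset.mem_filter.mpr ⟨Finset.mem_product.mpr ⟨ht, hu⟩, hs⟩)).trans hScard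
  · refine ⟨∅, by simp, fun t ht u hu hs => absurd ?_ hP⟩
    exact ⟨(t, u), Finset.mem_filter.mpr ⟨Finset.mem_product.mpr ⟨ht, hu⟩, hs⟩⟩

lemma exists_nearSet_succ (hα : 0 < α) (hβ : 0 < β) (hαβ : α + β = 1)
    (A B : Finset (Fin (n + 1) → ℤ)) (hA : A.Nonempty) (hB : B.Nonempty) :
    ∃ S : Finset (Fin (n + 1) → ℤ), (S : Set (Fin (n + 1) → ℤ)) ⊆ nearSet α β A B ∧
      (A.card : ℝ) ^ α * (B.card : ℝ) ^ β ≤ S.card := by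
  choose S hSnear hSbound using exists_fiber_nearSet ih A B
  set H := (A.image (· 0) ×ˢ B.image (· 0)).biUnion
    fun p : ℤ × ℤ => Finset.Icc ⌊α * p.1 + β * p.2⌋ ⌈α * p.1 + β * p.2⌉
  let cons : (Σ _ : ℤ, Fin n → ℤ) ↪ (Fin (n + 1) → ℤ) :=
    ⟨fun p => Fin.cons p.1 p.2, fun p q hpq => by
      obtain ⟨h1, h2⟩ := Fin.cons_injective2 hpq
      exact Sigma.ext h1 (heq_of_eq h2)⟩
  refine ⟨(H.sigma S).map cons, fun z hz => ?_, ?_⟩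
  · obtain ⟨⟨s, y⟩, hsy, rfl⟩ := Finset.mem_map.mp hz
    obtain ⟨t, u, hs, hy⟩ := hSnear s y (Finset.mem_sigma.mp hsy).2
    exact cons_mem_nearSet hs hy
  · rw [Finset.card_map, Finset.card_sigma, card_eq_sum_card_fiber A, card_eq_sum_card_fiber B]
    push_cast
    refine sum_rpow_mul_sum_rpow_le_sum hα hβ hαβ (hA.image _) (hB.image _)
      (fun t ht => by exact_mod_cast (fiber_nonempty_iff.mpr ht).card_pos)
      (fun u hu => by exact_mod_cast (fiber_nonempty_iff.mpr hu).card_pos)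
      (fun _ _ => Nat.cast_nonneg _) fun t ht u hu s hs => ⟨?_, hSbound s t ht u hu hs⟩
    exact Finset.mem_biUnion.mpr ⟨(t, u), Finset.mem_product.mpr ⟨ht, hu⟩,
      Int.mem_Icc_floor_ceil_of_abs_sub_lt_one hs⟩

end Step

/-- A discrete Brunn–Minkowski inequality in `ℤⁿ`. -/
theorem exists_nearSet_card (hα : 0 < α) (hβ : 0 < β) (hαβ : α + β = 1) :
    ∀ {n : ℕ} (A B : Finset (Fin n → ℤ)), A.Nonempty → B.Nonempty →
      ∃ S : Finset (Fin n → ℤ), (S : Set (Fin n → ℤ)) ⊆ nearSet α β A B ∧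
        (A.card : ℝ) ^ α * (B.card : ℝ) ^ β ≤ S.card
  | 0, A, B, hA, hB => by
    have hA1 : A.card = 1 := le_antisymm (Finset.card_le_one_of_subsingleton A) hA.card_pos
    have hB1 : B.card = 1 := le_antisymm (Finset.card_le_one_of_subsingleton B) hB.card_pos
    obtain ⟨b, hb⟩ := hB
    exact ⟨A, fun z hz => ⟨z, hz, b, hb, finZeroElim⟩, by simp [hA1, hB1]⟩
  | _ + 1, A, B, hA, hB =>
    exists_nearSet_succ (exists_nearSet_card hα hβ hαβ) hα hβ hαβ A B hA hB

end MultiDim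

section LatticePoints

variable {n : ℕ}

lemma intCast_comp_injective : Function.Injective fun z : Fin n → ℤ => (Int.cast ∘ z : Fin n → ℝ) :=
  fun _ _ h => funext fun i => Int.cast_injective (congrFun h i)

lemma latticeEnum_eq_ncard (M : Set (Fin n → ℝ)) :
    latticeEnum n M = {z : Fin n → ℤ | (Int.cast ∘ z : Fin n → ℝ) ∈ M}.ncard := by
  rw [latticeEnum, ← Set.ncard_image_of_injective _ intCast_comp_injective]
  congr 1
  ext x
  constructor
  · rintro ⟨hxM, hx⟩
    choose z hz using hx
    have hzx : (Int.cast ∘ z : Fin n → ℝ) = x := funext fun i => (hz i).symm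
    exact ⟨z, show _ ∈ M from hzx ▸ hxM, hzx⟩
  · rintro ⟨z, hz, rfl⟩
    exact ⟨hz, fun i => ⟨z i, rfl⟩⟩

lemma finite_intCast_mem_of_isBounded {M : Set (Fin n → ℝ)} (hM : Bornology.IsBounded M) :
    {z : Fin n → ℤ | (Int.cast ∘ z : Fin n → ℝ) ∈ M}.Finite := by
  have hbdd : Bornology.IsBounded {z : Fin n → ℤ | (Int.cast ∘ z : Fin n → ℝ) ∈ M} :=
    (Isometry.piMap _ fun _ => Real.isometry_intCast).antilipschitz.isBounded_preimage hM
  exact (Metric.isCompact_of_isClosed_isBounded (isClosed_discrete _) hbdd).finite_of_discrete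

lemma card_le_latticeEnum {M : Set (Fin n → ℝ)} (hM : Bornology.IsBounded M)
    (S : Finset (Fin n → ℤ)) (hS : ∀ z ∈ S, (Int.cast ∘ z : Fin n → ℝ) ∈ M) :
    S.card ≤ latticeEnum n M := by
  rw [latticeEnum_eq_ncard, ← Set.ncard_coe_finset]
  exact Set.ncard_le_ncard hS (finite_intCast_mem_of_isBounded hM)

lemma isBounded_openCube :
    Bornology.IsBounded {x : Fin n → ℝ | ∀ i, x i ∈ Ioo (-1 : ℝ) 1} :=
  (Metric.isBounded_closedBall (x := (0 : Fin n → ℝ)) (r := 1)).subset fun _ hx =>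
    mem_closedBall_zero_iff.mpr <| (pi_norm_le_iff_of_nonneg zero_le_one).mpr fun i =>
      (Real.norm_eq_abs _).trans_le (abs_le.mpr ⟨(hx i).1.le, (hx i).2.le⟩)

lemma intCast_mem_add_openCube {α β : ℝ} {K L : Set (Fin n → ℝ)} {A B : Finset (Fin n → ℤ)}
    (hA : ∀ a ∈ A, (Int.cast ∘ a : Fin n → ℝ) ∈ K) (hB : ∀ b ∈ B, (Int.cast ∘ b : Fin n → ℝ) ∈ L)
    {z : Fin n → ℤ} (hz : z ∈ nearSet α β A B) :
    (Int.cast ∘ z : Fin n → ℝ) ∈ α • K + β • L + {x | ∀ i, x i ∈ Ioo (-1 : ℝ) 1} := by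
  obtain ⟨a, ha, b, hb, hab⟩ := hz
  refine Set.mem_add.mpr ⟨_, Set.add_mem_add (Set.smul_mem_smul_set (hA a ha))
    (Set.smul_mem_smul_set (hB b hb)), _, fun i => ?_, add_sub_cancel _ _⟩
  simpa [abs_lt] using hab i

end LatticePoints

theorem stmt10_general (n : ℕ) (lam : ℝ) (hlam : lam ∈ Set.Ioo (0 : ℝ) 1)
    (K L : Set (Fin n → ℝ))
    (hKb : Bornology.IsBounded K) (hLb : Bornology.IsBounded L) :
    (latticeEnum n ((1 - lam) • K + lam • L +
        {x : Fin n → ℝ | ∀ i, x i ∈ Set.Ioo (-1 : ℝ) 1}) : ℝ) ≥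
      (latticeEnum n K : ℝ) ^ (1 - lam) * (latticeEnum n L : ℝ) ^ lam := by
  obtain ⟨hlam0, hlam1⟩ := hlam
  have hKfin := finite_intCast_mem_of_isBounded hKb
  have hLfin := finite_intCast_mem_of_isBounded hLb
  rw [ge_iff_le, latticeEnum_eq_ncard K, latticeEnum_eq_ncard L,
    Set.ncard_eq_toFinset_card _ hKfin, Set.ncard_eq_toFinset_card _ hLfin]
  rcases hKfin.toFinset.eq_empty_or_nonempty with hA | hA
  · rw [hA, Finset.card_empty, Nat.cast_zero, Real.zero_rpow (by linarith), zero_mul]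
    positivity
  rcases hLfin.toFinset.eq_empty_or_nonempty with hB | hB
  · rw [hB, Finset.card_empty, Nat.cast_zero, Real.zero_rpow hlam0.ne', mul_zero]
    positivity
  obtain ⟨S, hS, hcard⟩ := exists_nearSet_card (by linarith) hlam0 (sub_add_cancel 1 lam) _ _ hA hB
  refine hcard.trans (Nat.cast_le.mpr (card_le_latticeEnum
    (((hKb.smul₀ _).add (hLb.smul₀ _)).add isBounded_openCube) S fun z hz => ?_))
  exact intCast_mem_add_openCube (fun a ha => hKfin.mem_toFinset.mp ha)
    (fun b hb => hLfin.mem_toFinset.mp hb) (hS hz)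

theorem stmt10 (n : ℕ) (hn : 0 < n) (lam : ℝ) (hlam : lam ∈ Set.Ioo (0 : ℝ) 1)
    (K L : Set (Fin n → ℝ)) (hK : K.Nonempty) (hL : L.Nonempty)
    (hKb : Bornology.IsBounded K) (hLb : Bornology.IsBounded L) :
    (latticeEnum n ((1 - lam) • K + lam • L +
        {x : Fin n → ℝ | ∀ i, x i ∈ Set.Ioo (-1 : ℝ) 1}) : ℝ) ≥
      (latticeEnum n K : ℝ) ^ (1 - lam) * (latticeEnum n L : ℝ) ^ lam :=
  stmt10_general n lam hlam K L hKb hLb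
end

section
/- Let K, L ⊂ ℝ be non-empty bounded sets and α = m/q, β = p/q with m, p, q positive integers and α + β ≤ 1. Then G_1(αK + βL + [−(q−1)/q, (q−1)/q]) ≥ αG_1(K) + βG_1(L). -/
open Set
open scoped Pointwise

/-!
An integer `x ∈ m • K + p • L + [0, q - 1]` rounds down to the lattice point `x / q` of
`α • K + β • L + [-(q - 1)/q, (q - 1)/q]`, and at most `q` integers round to the same point, so it
suffices to find `m G₁(K) + p G₁(L)` integers in `m • K + p • L + [0, q - 1]`.

If `A = K ∩ ℤ` and `B = L ∩ ℤ` are nonempty, `m • A + {0, …, m - 1}` and `p • B + {0, …, p - 1}`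
have `m |A|` and `p |B|` elements; Cauchy–Davenport in `ℤ` bounds their sum from below by
`m |A| + p |B| - 1`, and adding `{0, 1}` wins back the lost point while the offsets stay
at most `m + p - 1 ≤ q - 1`. If `A` is empty, a real point `x₀ ∈ K` and the translate
`⌈m x₀⌉ + p • B + {0, …, p - 1}` do the job, because `p ≤ q - 1`.
-/

namespace LatticeBrunnMinkowski

open Finset

lemma latticeEnum1_eq_ncard (M : Set ℝ) : latticeEnum1 M = {z : ℤ | (z : ℝ) ∈ M}.ncard := by
  have : M ∩ {x : ℝ | ∃ z : ℤ, x = z} = Int.cast '' {z : ℤ | (z : ℝ) ∈ M} := by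
    ext x
    constructor
    · rintro ⟨hx, z, rfl⟩
      exact ⟨z, hx, rfl⟩
    · rintro ⟨z, hz, rfl⟩
      exact ⟨hz, z, rfl⟩
  rw [latticeEnum1, this, Set.ncard_image_of_injective _ Int.cast_injective]

lemma finite_intCast_preimage {M : Set ℝ} (hM : Bornology.IsBounded M) :
    {z : ℤ | (z : ℝ) ∈ M}.Finite := by
  refine (Set.finite_Icc ⌈sInf M⌉ ⌊sSup M⌋).subset fun z hz => ?_
  obtain ⟨ha, hb⟩ := hM.subset_Icc_sInf_sSup hz
  exact ⟨Int.ceil_le.2 ha, Int.le_floor.2 hb⟩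

lemma card_le_latticeEnum1 {M : Set ℝ} (hM : Bornology.IsBounded M) {T : Finset ℤ}
    (hT : ∀ z ∈ T, (z : ℝ) ∈ M) : #T ≤ latticeEnum1 M := by
  rw [latticeEnum1_eq_ncard, ← Set.ncard_coe_finset]
  exact Set.ncard_le_ncard (fun z hz => hT z hz) (finite_intCast_preimage hM)

lemma exists_finset_card_eq_latticeEnum1 {M : Set ℝ} (hM : Bornology.IsBounded M) :
    ∃ A : Finset ℤ, #A = latticeEnum1 M ∧ ∀ a ∈ A, (a : ℝ) ∈ M :=
  ⟨(finite_intCast_preimage hM).toFinset,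
    by rw [latticeEnum1_eq_ncard, Set.ncard_eq_toFinset_card _ (finite_intCast_preimage hM)],
    fun _ ha => (Set.Finite.mem_toFinset (finite_intCast_preimage hM)).1 ha⟩

lemma card_le_mul_latticeEnum1_of_ediv_mem {q : ℕ} (hq : 0 < q) {M : Set ℝ}
    (hM : Bornology.IsBounded M)
    (E : Finset ℤ) (hE : ∀ x ∈ E, ((x / q : ℤ) : ℝ) ∈ M) : #E ≤ q * latticeEnum1 M := by
  have hqZ : (0 : ℤ) < q := by exact_mod_cast hq
  have hfibre : ∀ z ∈ E.image (· / (q : ℤ)), #{x ∈ E | x / q = z} ≤ q := by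
    intro z _
    calc #{x ∈ E | x / q = z} ≤ #(Finset.Ico (q * z) (q * z + q)) := by
          refine Finset.card_le_card fun x hx => ?_
          obtain ⟨-, rfl⟩ := Finset.mem_filter.1 hx
          have := Int.mul_ediv_add_emod x q
          have := Int.emod_nonneg x hqZ.ne'
          have := Int.emod_lt_of_pos x hqZ
          exact Finset.mem_Ico.2 ⟨by omega, by omega⟩
      _ = q := by simp
  calc #E ≤ q * #(E.image (· / (q : ℤ))) := Finset.card_le_mul_card_image E q hfibre
    _ ≤ q * latticeEnum1 M := by
        gcongr
        exact card_le_latticeEnum1 hM fun z hz => by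
          obtain ⟨x, hx, rfl⟩ := Finset.mem_image.1 hz
          exact hE x hx

lemma intCast_ediv_mem_inv_smul_add_Icc {q : ℕ} (hq : 0 < q) {M : Set ℝ} {x : ℤ}
    (hx : (x : ℝ) ∈ M + Icc 0 ((q : ℝ) - 1)) :
    ((x / q : ℤ) : ℝ) ∈ (q : ℝ)⁻¹ • M + Icc (-(((q : ℝ) - 1) / q)) (((q : ℝ) - 1) / q) := by
  obtain ⟨c, hc, t, ⟨ht0, ht1⟩, hct⟩ := hx
  have hqZ : (0 : ℤ) < q := by exact_mod_cast hq
  have hqR : (0 : ℝ) < q := by exact_mod_cast hq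
  have hdiv : (q : ℝ) * (x / q : ℤ) + (x % q : ℤ) = x := by exact_mod_cast Int.mul_ediv_add_emod x q
  have hrem0 : (0 : ℝ) ≤ (x % q : ℤ) := by exact_mod_cast Int.emod_nonneg x hqZ.ne'
  have hrem1 : ((x % q : ℤ) : ℝ) ≤ q - 1 := by
    have := Int.emod_lt_of_pos x hqZ
    have : x % q ≤ q - 1 := by omega
    exact_mod_cast this
  refine ⟨(q : ℝ)⁻¹ * c, Set.smul_mem_smul_set hc, (t - (x % q : ℤ)) / q, ⟨?_, ?_⟩, ?_⟩
  · rw [neg_div', div_le_div_iff_of_pos_right hqR]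
    linarith
  · rw [div_le_div_iff_of_pos_right hqR]
    linarith
  · field_simp
    linarith

/-- `blowUp m A` is `m • A + {0, …, m - 1}`, a disjoint union of `#A` blocks of length `m`. -/
def blowUp (m : ℕ) (A : Finset ℤ) : Finset ℤ :=
  (A ×ˢ Finset.range m).image fun x => m * x.1 + x.2

lemma mem_blowUp {m : ℕ} {A : Finset ℤ} {x : ℤ} :
    x ∈ blowUp m A ↔ ∃ a ∈ A, ∃ i < m, m * a + i = x := by
  simp [blowUp, and_assoc]

lemma card_blowUp (m : ℕ) (A : Finset ℤ) : #(blowUp m A) = m * #A := by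
  rw [blowUp, Finset.card_image_of_injOn, Finset.card_product, Finset.card_range, mul_comm]
  rintro ⟨a, i⟩ hai ⟨b, j⟩ hbj h
  simp only [Finset.coe_product, Set.mem_prod, Finset.mem_coe, Finset.mem_range] at hai hbj h
  have hab : a = b := by
    by_contra hne
    rcases lt_or_gt_of_ne hne with hlt | hlt <;> nlinarith
  subst hab
  simp_all

lemma add_mem_smul_add_smul_add_Icc {μ ν c a b t : ℝ} {K L : Set ℝ} (ha : a ∈ K) (hb : b ∈ L)
    (ht₀ : 0 ≤ t) (ht₁ : t ≤ c) : μ * a + ν * b + t ∈ μ • K + ν • L + Icc 0 c :=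
  add_mem_add (add_mem_add (smul_mem_smul_set ha) (smul_mem_smul_set hb)) ⟨ht₀, ht₁⟩

lemma card_le_card_blowUp_add_blowUp_add_pair {m p : ℕ} (hm : 0 < m) (hp : 0 < p)
    {A B : Finset ℤ} (hA : A.Nonempty) (hB : B.Nonempty) :
    m * #A + p * #B ≤ #(blowUp m A + blowUp p B + {0, 1}) := by
  have hX : (blowUp m A).Nonempty := by
    rw [← Finset.card_pos, card_blowUp]; exact Nat.mul_pos hm hA.card_pos
  have hY : (blowUp p B).Nonempty := by
    rw [← Finset.card_pos, card_blowUp]; exact Nat.mul_pos hp hB.card_pos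
  have hXY := cauchy_davenport_add_of_linearOrder_isCancelAdd hX hY
  have hXY01 := cauchy_davenport_add_of_linearOrder_isCancelAdd (hX.add hY)
    (Finset.insert_nonempty (0 : ℤ) {1})
  have hpair : #({0, 1} : Finset ℤ) = 2 := rfl
  rw [card_blowUp, card_blowUp] at hXY
  omega

lemma exists_finset_card_ge_of_nonempty {m p q : ℕ} (hm : 0 < m) (hp : 0 < p) (hmp : m + p ≤ q)
    {K L : Set ℝ} {A B : Finset ℤ} (hAK : ∀ a ∈ A, (a : ℝ) ∈ K) (hBL : ∀ b ∈ B, (b : ℝ) ∈ L)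
    (hA : A.Nonempty) (hB : B.Nonempty) :
    ∃ E : Finset ℤ, m * #A + p * #B ≤ #E ∧
      ∀ x ∈ E, (x : ℝ) ∈ (m : ℝ) • K + (p : ℝ) • L + Icc 0 ((q : ℝ) - 1) := by
  refine ⟨_, card_le_card_blowUp_add_blowUp_add_pair hm hp hA hB, fun x hx => ?_⟩
  obtain ⟨_, huv, k, hk, rfl⟩ := Finset.mem_add.1 hx
  obtain ⟨u, hu, v, hv, rfl⟩ := Finset.mem_add.1 huv
  obtain ⟨a, ha, i, hi, rfl⟩ := mem_blowUp.1 hu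
  obtain ⟨b, hb, j, hj, rfl⟩ := mem_blowUp.1 hv
  have hk : k = 0 ∨ k = 1 := by simpa using hk
  have ht : (i + j + k : ℤ) ≤ q - 1 := by omega
  have ht' : (0 : ℤ) ≤ i + j + k := by omega
  convert add_mem_smul_add_smul_add_Icc (hAK a ha) (hBL b hb)
    (by exact_mod_cast ht' : (0 : ℝ) ≤ ((i + j + k : ℤ) : ℝ))
    (by exact_mod_cast ht : ((i + j + k : ℤ) : ℝ) ≤ (q : ℝ) - 1) using 1
  push_cast
  ring

lemma exists_finset_card_ge_of_mem {μ : ℝ} {p q : ℕ} (hpq : p < q) {K L : Set ℝ} {x₀ : ℝ}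
    (hx₀ : x₀ ∈ K) {B : Finset ℤ} (hBL : ∀ b ∈ B, (b : ℝ) ∈ L) :
    ∃ E : Finset ℤ, p * #B ≤ #E ∧
      ∀ x ∈ E, (x : ℝ) ∈ μ • K + (p : ℝ) • L + Icc 0 ((q : ℝ) - 1) := by
  refine ⟨(blowUp p B).image (· + ⌈μ * x₀⌉), ?_, fun x hx => ?_⟩
  · rw [Finset.card_image_of_injective _ (add_left_injective _), card_blowUp]
  obtain ⟨_, hu, rfl⟩ := Finset.mem_image.1 hx
  obtain ⟨b, hb, j, hj, rfl⟩ := mem_blowUp.1 hu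
  have hceil := Int.le_ceil (μ * x₀)
  have hceil' := Int.ceil_lt_add_one (μ * x₀)
  have hj' : (j : ℝ) + 1 ≤ p := by exact_mod_cast hj
  have hpq' : (p : ℝ) + 1 ≤ q := by exact_mod_cast hpq
  convert add_mem_smul_add_smul_add_Icc (μ := μ) (ν := p) (c := (q : ℝ) - 1) hx₀ (hBL b hb)
    (t := ⌈μ * x₀⌉ - μ * x₀ + j) (by positivity) (by linarith) using 1
  push_cast
  ring

lemma exists_finset_card_ge {m p q : ℕ} (hm : 0 < m) (hp : 0 < p) (hmp : m + p ≤ q)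
    {K L : Set ℝ} (hK : K.Nonempty) (hL : L.Nonempty) {A B : Finset ℤ}
    (hAK : ∀ a ∈ A, (a : ℝ) ∈ K) (hBL : ∀ b ∈ B, (b : ℝ) ∈ L) :
    ∃ E : Finset ℤ, m * #A + p * #B ≤ #E ∧
      ∀ x ∈ E, (x : ℝ) ∈ (m : ℝ) • K + (p : ℝ) • L + Icc 0 ((q : ℝ) - 1) := by
  rcases A.eq_empty_or_nonempty with rfl | hA
  · obtain ⟨x₀, hx₀⟩ := hK
    simpa using exists_finset_card_ge_of_mem (μ := m) (by omega : p < q) hx₀ hBL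
  rcases B.eq_empty_or_nonempty with rfl | hB
  · obtain ⟨y₀, hy₀⟩ := hL
    obtain ⟨E, hcard, hE⟩ := exists_finset_card_ge_of_mem (μ := p) (by omega : m < q) hy₀ hAK
    refine ⟨E, by simpa using hcard, fun x hx => ?_⟩
    rw [add_comm ((m : ℝ) • K)]
    exact hE x hx
  exact exists_finset_card_ge_of_nonempty hm hp hmp hAK hBL hA hB

end LatticeBrunnMinkowski

open LatticeBrunnMinkowski in
theorem stmt11 (K L : Set ℝ) (hK : K.Nonempty) (hL : L.Nonempty)
    (hKb : Bornology.IsBounded K) (hLb : Bornology.IsBounded L)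
    (m p q : ℕ) (hm : 0 < m) (hp : 0 < p) (hq : 0 < q)
    (hαβ : (m : ℝ) / q + (p : ℝ) / q ≤ 1) :
    (latticeEnum1 (((m : ℝ) / q) • K + ((p : ℝ) / q) • L +
        Set.Icc (-(((q : ℝ) - 1) / q)) (((q : ℝ) - 1) / q)) : ℝ) ≥
      (m : ℝ) / q * (latticeEnum1 K : ℝ) + (p : ℝ) / q * (latticeEnum1 L : ℝ) := by
  have hqR : (0 : ℝ) < q := by exact_mod_cast hq
  have hmp : m + p ≤ q := by
    rw [← add_div, div_le_one hqR] at hαβ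
    exact_mod_cast hαβ
  obtain ⟨A, hA, hAK⟩ := exists_finset_card_eq_latticeEnum1 hKb
  obtain ⟨B, hB, hBL⟩ := exists_finset_card_eq_latticeEnum1 hLb
  obtain ⟨E, hcard, hE⟩ := exists_finset_card_ge hm hp hmp hK hL hAK hBL
  have hdilate : ((m : ℝ) / q) • K + ((p : ℝ) / q) • L =
      (q : ℝ)⁻¹ • ((m : ℝ) • K + (p : ℝ) • L) := by
    rw [smul_add, smul_smul, smul_smul, div_eq_inv_mul, div_eq_inv_mul]
  have hbdd : Bornology.IsBounded (((m : ℝ) / q) • K + ((p : ℝ) / q) • L +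
      Set.Icc (-(((q : ℝ) - 1) / q)) (((q : ℝ) - 1) / q)) :=
    isBounded_add (isBounded_add (hKb.smul₀ _) (hLb.smul₀ _)) (Metric.isBounded_Icc _ _)
  have hround := card_le_mul_latticeEnum1_of_ediv_mem hq hbdd E fun x hx => by
    rw [hdilate]
    exact intCast_ediv_mem_inv_smul_add_Icc hq (hE x hx)
  rw [ge_iff_le, div_mul_eq_mul_div, div_mul_eq_mul_div, ← add_div, div_le_iff₀ hqR, ← hA, ← hB,
    mul_comm _ (q : ℝ)]
  exact_mod_cast hcard.trans hround
end

section
/- Let K, L ⊂ ℝ be non-empty bounded sets. Then G_1((K + L)/2 + [0,1]) ≥ (G_1(K) + G_1(L))/2. -/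
open Set
open scoped Pointwise

/-!
Let `A`, `B`, `S` be the integer points of `K`, `L` and `T = (K + L)/2 + [0,1]`. If `A` and `B`
are nonempty, every `c ∈ A + B + {0,1}` satisfies `⌈c/2⌉ ∈ S`, the map `c ↦ ⌈c/2⌉` is at most
two-to-one, and `#(A + B + {0,1}) ≥ #A + #B` by Cauchy–Davenport over `ℤ`, applied twice. If `A`
is empty, pick any `x ∈ K`; then `b ↦ ⌈(x + b)/2⌉` maps `B` into `S`, again at most two-to-one
(symmetrically if `B` is empty).
-/

lemma finite_preimage_intCast_of_isBounded {M : Set ℝ} (hM : Bornology.IsBounded M) :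
    ((↑) ⁻¹' M : Set ℤ).Finite := by
  have h := Int.tendsto_coe_cofinite hM.isCompact_closure.compl_mem_cocompact
  rw [Filter.mem_map, Filter.mem_cofinite, ← preimage_compl, compl_compl] at h
  exact h.subset (preimage_mono subset_closure)

lemma latticeEnum1_eq_ncard_preimage (M : Set ℝ) :
    latticeEnum1 M = ((↑) ⁻¹' M : Set ℤ).ncard := by
  have h : M ∩ {x : ℝ | ∃ z : ℤ, x = z} = (↑) '' ((↑) ⁻¹' M : Set ℤ) := by
    rw [image_preimage_eq_inter_range]
    congr 1
    ext x
    exact exists_congr fun z => eq_comm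
  rw [latticeEnum1, h, ncard_image_of_injective _ Int.cast_injective]

lemma mem_half_add_Icc {K L : Set ℝ} {x y t : ℝ} (hx : x ∈ K) (hy : y ∈ L)
    (h₁ : x + y ≤ 2 * t) (h₂ : 2 * t ≤ x + y + 2) :
    t ∈ (2 : ℝ)⁻¹ • (K + L) + Set.Icc 0 1 :=
  ⟨2⁻¹ * (x + y), ⟨x + y, add_mem_add hx hy, rfl⟩, t - (x + y) / 2,
    ⟨by linarith, by linarith⟩, by ring⟩

open Finset

lemma card_le_two_mul_card_image_ceil_half (x : ℝ) (C : Finset ℤ) :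
    #C ≤ 2 * #(C.image fun c : ℤ => ⌈(x + c) / 2⌉) := by
  refine card_le_mul_card_image C 2 fun z _ => ?_
  set m := ⌊2 * (z : ℝ) - x⌋
  calc _ ≤ #(Ioc (m - 2) m) := by
        refine card_le_card fun c hc => ?_
        obtain ⟨hlt, hle⟩ := Int.ceil_eq_iff.1 (mem_filter.1 hc).2
        rw [Finset.mem_Ioc, Int.sub_lt_iff, Int.floor_lt, Int.le_floor]
        push_cast
        constructor <;> linarith
    _ = 2 := by simp

variable {K L : Set ℝ} {S : Finset ℤ}

lemma card_le_two_mul_card_of_mem_left {x : ℝ} (hx : x ∈ K) {B : Finset ℤ}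
    (hB : ∀ b ∈ B, (b : ℝ) ∈ L)
    (hS : ∀ z : ℤ, (z : ℝ) ∈ (2 : ℝ)⁻¹ • (K + L) + Set.Icc 0 1 → z ∈ S) :
    #B ≤ 2 * #S := by
  refine (card_le_two_mul_card_image_ceil_half x B).trans (Nat.mul_le_mul_left 2 ?_)
  refine card_le_card (image_subset_iff.2 fun b hb => hS _ (mem_half_add_Icc hx (hB b hb) ?_ ?_))
  · linarith [Int.le_ceil ((x + b) / 2)]
  · linarith [Int.ceil_lt_add_one ((x + b) / 2)]

lemma card_add_card_le_two_mul_card_of_nonempty {A B : Finset ℤ} (hA₀ : A.Nonempty)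
    (hB₀ : B.Nonempty) (hA : ∀ a ∈ A, (a : ℝ) ∈ K) (hB : ∀ b ∈ B, (b : ℝ) ∈ L)
    (hS : ∀ z : ℤ, (z : ℝ) ∈ (2 : ℝ)⁻¹ • (K + L) + Set.Icc 0 1 → z ∈ S) :
    #A + #B ≤ 2 * #S := by
  have h01 : ({0, 1} : Finset ℤ).Nonempty := insert_nonempty 0 {1}
  have hC : #A + #B ≤ #(A + (B + {0, 1})) := by
    have := cauchy_davenport_add_of_linearOrder_isCancelAdd hB₀ h01
    have := cauchy_davenport_add_of_linearOrder_isCancelAdd hA₀ (hB₀.add h01)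
    simp only [card_pair zero_ne_one] at *
    omega
  refine hC.trans ((card_le_two_mul_card_image_ceil_half 0 _).trans (Nat.mul_le_mul_left 2 ?_))
  simp only [zero_add]
  refine card_le_card (image_subset_iff.2 fun c hc => ?_)
  obtain ⟨a, ha, d, hd, rfl⟩ := Finset.mem_add.1 hc
  obtain ⟨b, hb, k, hk, rfl⟩ := Finset.mem_add.1 hd
  have hk01 : k = 0 ∨ k = 1 := by simpa using hk
  have hz₁ : ((a + (b + k) : ℤ) : ℝ) ≤ 2 * ⌈((a + (b + k) : ℤ) : ℝ) / 2⌉ := by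
    linarith [Int.le_ceil (((a + (b + k) : ℤ) : ℝ) / 2)]
  have hz₂ : 2 * ⌈((a + (b + k) : ℤ) : ℝ) / 2⌉ < ((a + (b + k) : ℤ) : ℝ) + 2 := by
    linarith [Int.ceil_lt_add_one (((a + (b + k) : ℤ) : ℝ) / 2)]
  norm_cast at hz₁ hz₂
  refine hS _ (mem_half_add_Icc (hA a ha) (hB b hb) ?_ ?_) <;> norm_cast <;> omega

lemma card_add_card_le_two_mul_card (hK : K.Nonempty) (hL : L.Nonempty) {A B : Finset ℤ}
    (hA : ∀ a ∈ A, (a : ℝ) ∈ K) (hB : ∀ b ∈ B, (b : ℝ) ∈ L)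
    (hS : ∀ z : ℤ, (z : ℝ) ∈ (2 : ℝ)⁻¹ • (K + L) + Set.Icc 0 1 → z ∈ S) :
    #A + #B ≤ 2 * #S := by
  rcases A.eq_empty_or_nonempty with rfl | hA₀
  · simpa using card_le_two_mul_card_of_mem_left hK.some_mem hB hS
  rcases B.eq_empty_or_nonempty with rfl | hB₀
  · rw [add_comm K L] at hS
    simpa using card_le_two_mul_card_of_mem_left hL.some_mem hA hS
  exact card_add_card_le_two_mul_card_of_nonempty hA₀ hB₀ hA hB hS

theorem stmt16 (K L : Set ℝ) (hK : K.Nonempty) (hL : L.Nonempty)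
    (hKb : Bornology.IsBounded K) (hLb : Bornology.IsBounded L) :
    (latticeEnum1 ((2 : ℝ)⁻¹ • (K + L) + Set.Icc (0 : ℝ) 1) : ℝ) ≥
      ((latticeEnum1 K : ℝ) + (latticeEnum1 L : ℝ)) / 2 := by
  have hTb : Bornology.IsBounded ((2 : ℝ)⁻¹ • (K + L) + Set.Icc (0 : ℝ) 1) :=
    ((hKb.add hLb).smul₀ _).add (Metric.isBounded_Icc 0 1)
  have hA := finite_preimage_intCast_of_isBounded hKb
  have hB := finite_preimage_intCast_of_isBounded hLb
  have hS := finite_preimage_intCast_of_isBounded hTb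
  have key := card_add_card_le_two_mul_card hK hL (A := hA.toFinset) (B := hB.toFinset)
    (S := hS.toFinset) (by simp) (by simp) (by simp)
  simp only [latticeEnum1_eq_ncard_preimage, ncard_eq_toFinset_card _ hA,
    ncard_eq_toFinset_card _ hB, ncard_eq_toFinset_card _ hS]
  rw [ge_iff_le, div_le_iff₀ two_pos]
  exact_mod_cast key.trans_eq (mul_comm _ _)
end
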